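/- arXiv:2103.13551 — 10 statements merged into one kernel-verified Lean document; each statement's English description precedes it below -/
import Mathlib

section
/- Every sublacunary set is not an I_0-set: if {r_n}_{n∈ℕ} is a strictly increasing sequence of positive integers with lim_{n→∞} (log r_n)/n = 0, then E = {r_n : n ∈ ℕ} is not an I_0-set. -/
open Filter Topology

noncomputable section

/-- A trigonometric polynomial. -/
def IsTrigPoly (ψ : ℕ → ℂ) : Prop :=
  ∃ (k : ℕ) (c : Fin k → ℂ) (α : Fin k → ℝ), ∀ n : ℕ,
    ψ n = ∑ j, c j * Complex.exp (2 * Real.pi * Complex.I * (n : ℂ) * (α j : ℂ))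

/-- A Bohr almost periodic sequence: a uniform limit of trigonometric polynomials. -/
def IsBohrAP (ψ : ℕ → ℂ) : Prop :=
  ∀ ε : ℝ, 0 < ε → ∃ φ : ℕ → ℂ, IsTrigPoly φ ∧ ∀ n : ℕ, ‖ψ n - φ n‖ < ε

/-- `E` is an `I₀`-set. -/
def IsI0Set (E : Set ℕ) : Prop :=
  ∀ f : ℕ → ℂ, (∃ C : ℝ, ∀ n ∈ E, ‖f n‖ ≤ C) →
    ∃ ψ : ℕ → ℂ, IsBohrAP ψ ∧ ∀ n ∈ E, ψ n = f n

/-- `A` and `B` are separable by a Bohr rotation. -/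
def SeparableByBohr (A B : Set ℕ) : Prop :=
  ∃ (d : ℕ) (α : Fin d → AddCircle (1 : ℝ)),
    closure ((fun n : ℕ => n • α) '' A) ∩ closure ((fun n : ℕ => n • α) '' B) = ∅

/-- `R` is a set of Bohr recurrence. -/
def IsBohrRecurrence (R : Set ℕ) : Prop :=
  ∀ (d : ℕ) (α : Fin d → AddCircle (1 : ℝ)),
    (0 : Fin d → AddCircle (1 : ℝ)) ∈ closure ((fun n : ℕ => n • α) '' R)

/-- `r` is a lacunary sequence of positive integers. -/
def IsLacunarySeq (r : ℕ → ℕ) : Prop :=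
  (∀ n, 0 < r n) ∧ StrictMono r ∧ ∃ c : ℝ, 1 < c ∧ ∀ n, c ≤ (r (n + 1) : ℝ) / (r n : ℝ)

/-- `r` is a sublacunary sequence of positive integers. -/
def IsSublacunarySeq (r : ℕ → ℕ) : Prop :=
  (∀ n, 0 < r n) ∧ StrictMono r ∧
    Tendsto (fun n : ℕ => Real.log (r n) / (n : ℝ)) atTop (𝓝 0)

/-!
If `Set.range r` were an `I₀`-set, every coloring `s : ℕ → Bool` would be interpolated on it by a
Bohr almost periodic sequence, and these are uniformly continuous for the Bohr topology: for some
`α : Fin k → 𝕋` and `δ > 0`, any `n, n'` of different colors have `‖r n • α j - r n' • α j‖ ≥ δ`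
for some `j`. For fixed `k` and `δ` the colorings separated in this way form a closed subset of
the Cantor space `ℕ → Bool` (a projection along the compact torus `𝕋ᵏ`), so by Baire one of them
contains a cylinder. But rounding `α` to the grid `(1 / P) ℤ` with `P = 4 r N / δ`, and the points
`r n • α j` to arcs of length `δ / 4`, shows that only `(C r N)ᵏ · 2 ^ Cᵏ` colorings of the first
`N` integers are separated, fewer than `2 ^ N` once `log r N = o(N)`.
-/

open Real

theorem UnitAddCircle.norm_toCircle_sub_one_le (x : UnitAddCircle) :
    ‖(AddCircle.toCircle x : ℂ) - 1‖ ≤ 2 * π * ‖x‖ := by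
  induction x using QuotientAddGroup.induction_on with | H y => ?_
  have hy : ((y : ℝ) : UnitAddCircle) = ((y - round y : ℝ) : UnitAddCircle) := by
    rw [AddCircle.coe_sub, eq_comm, sub_eq_self, AddCircle.coe_eq_zero_iff]
    exact ⟨round y, by simp⟩
  rw [hy, UnitAddCircle.norm_eq, AddCircle.toCircle_apply_mk, Circle.coe_exp]
  calc ‖Complex.exp ((2 * π / 1 * (y - round y) : ℝ) * Complex.I) - 1‖
      ≤ ‖2 * π / 1 * (y - round y)‖ := by
        rw [mul_comm]; exact Real.norm_exp_I_mul_ofReal_sub_one_le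
    _ = 2 * π * |y - round y - round (y - round y)| := by
        simp [Real.norm_eq_abs, abs_of_pos pi_pos]

theorem UnitAddCircle.norm_toCircle_sub_toCircle_le (x y : UnitAddCircle) :
    ‖(AddCircle.toCircle x : ℂ) - AddCircle.toCircle y‖ ≤ 2 * π * ‖x - y‖ := by
  have hx : (AddCircle.toCircle x : ℂ) = AddCircle.toCircle (x - y) * AddCircle.toCircle y := by
    rw [← Circle.coe_mul, ← AddCircle.toCircle_add, sub_add_cancel]
  rw [hx, ← sub_one_mul, norm_mul, Circle.norm_coe, mul_one]
  exact norm_toCircle_sub_one_le (x - y)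

theorem exp_two_pi_I_mul_eq_toCircle_nsmul (n : ℕ) (α : ℝ) :
    Complex.exp (2 * π * Complex.I * n * α) = AddCircle.toCircle (n • (α : UnitAddCircle)) := by
  rw [← AddCircle.coe_nsmul, AddCircle.toCircle_apply_mk, Circle.coe_exp]
  push_cast
  ring_nf

theorem IsTrigPoly.exists_norm_sub_lt {φ : ℕ → ℂ} (hφ : IsTrigPoly φ) {ε : ℝ} (hε : 0 < ε) :
    ∃ (k : ℕ) (α : Fin k → UnitAddCircle) (δ : ℝ), 0 < δ ∧
      ∀ a b : ℕ, (∀ j, ‖a • α j - b • α j‖ < δ) → ‖φ a - φ b‖ < ε := by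
  obtain ⟨k, c, α, hφ⟩ := hφ
  set M := ∑ j, ‖c j‖
  have hM : 0 ≤ M := Finset.sum_nonneg fun j _ => norm_nonneg (c j)
  refine ⟨k, fun j => α j, ε / (2 * π * (M + 1)), by positivity, fun a b hab => ?_⟩
  calc ‖φ a - φ b‖
      ≤ ∑ j, ‖c j‖ * (2 * π * ‖a • (α j : UnitAddCircle) - b • (α j : UnitAddCircle)‖) := by
        simp only [hφ, ← Finset.sum_sub_distrib, ← mul_sub, exp_two_pi_I_mul_eq_toCircle_nsmul]
        refine (norm_sum_le _ _).trans (Finset.sum_le_sum fun j _ => ?_)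
        rw [norm_mul]
        gcongr
        exact UnitAddCircle.norm_toCircle_sub_toCircle_le _ _
    _ ≤ ∑ j, ‖c j‖ * (2 * π * (ε / (2 * π * (M + 1)))) := by
        gcongr with j
        exact (hab j).le
    _ = ε * (M / (M + 1)) := by
        simp only [← Finset.sum_mul, M]
        field_simp
    _ < ε := mul_lt_of_lt_one_right hε ((div_lt_one (by positivity)).2 (lt_add_one M))

theorem IsBohrAP.exists_norm_sub_lt {ψ : ℕ → ℂ} (hψ : IsBohrAP ψ) {ε : ℝ} (hε : 0 < ε) :
    ∃ (k : ℕ) (α : Fin k → UnitAddCircle) (δ : ℝ), 0 < δ ∧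
      ∀ a b : ℕ, (∀ j, ‖a • α j - b • α j‖ < δ) → ‖ψ a - ψ b‖ < ε := by
  obtain ⟨φ, hφ, hψφ⟩ := hψ (ε / 3) (by positivity)
  obtain ⟨k, α, δ, hδ, hφδ⟩ := hφ.exists_norm_sub_lt (ε := ε / 3) (by positivity)
  refine ⟨k, α, δ, hδ, fun a b hab => ?_⟩
  calc ‖ψ a - ψ b‖ = ‖(ψ a - φ a) + (φ a - φ b) - (ψ b - φ b)‖ := by ring_nf
    _ ≤ ‖ψ a - φ a‖ + ‖φ a - φ b‖ + ‖ψ b - φ b‖ := norm_sub_le_of_le (norm_add_le _ _) le_rfl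
    _ < ε / 3 + ε / 3 + ε / 3 := by gcongr <;> apply_rules
    _ = ε := by ring

def separatedColorings (r : ℕ → ℕ) (k : ℕ) (δ : ℝ) : Set (ℕ → Bool) :=
  {s | ∃ α : Fin k → UnitAddCircle, ∀ n n', s n ≠ s n' → ∃ j, δ ≤ ‖r n • α j - r n' • α j‖}

theorem separatedColorings_anti (r : ℕ → ℕ) (k : ℕ) : Antitone (separatedColorings r k) := by
  rintro δ δ' hδ s ⟨α, hα⟩
  exact ⟨α, fun n n' hs => (hα n n' hs).imp fun j => hδ.trans⟩

theorem exists_mem_separatedColorings_of_isI0Set {r : ℕ → ℕ} (hr : Function.Injective r)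
    (hI0 : IsI0Set (Set.range r)) (s : ℕ → Bool) :
    ∃ k δ, 0 < δ ∧ s ∈ separatedColorings r k δ := by
  set f : ℕ → ℂ := Function.extend r (fun n => if s n then 1 else 0) 0
  have hf : ∀ n, f (r n) = if s n then 1 else 0 := hr.extend_apply _ _
  obtain ⟨ψ, hψ, hψf⟩ := hI0 f ⟨1, by rintro _ ⟨n, rfl⟩; rw [hf]; split_ifs <;> simp⟩
  obtain ⟨k, α, δ, hδ, hψδ⟩ := hψ.exists_norm_sub_lt one_pos
  refine ⟨k, δ, hδ, α, fun n n' hs => ?_⟩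
  by_contra! hclose
  have := hψδ _ _ hclose
  rw [hψf _ ⟨n, rfl⟩, hψf _ ⟨n', rfl⟩, hf, hf] at this
  cases h : s n <;> cases h' : s n' <;> simp_all

theorem iUnion_separatedColorings_eq_univ {r : ℕ → ℕ} (hr : Function.Injective r)
    (hI0 : IsI0Set (Set.range r)) :
    ⋃ p : ℕ × ℕ, separatedColorings r p.1 (1 / (p.2 + 1)) = Set.univ := by
  refine Set.eq_univ_of_forall fun s => ?_
  obtain ⟨k, δ, hδ, hs⟩ := exists_mem_separatedColorings_of_isI0Set hr hI0 s
  obtain ⟨q, hq⟩ := exists_nat_one_div_lt hδ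
  exact Set.mem_iUnion.2 ⟨(k, q), separatedColorings_anti r k hq.le hs⟩

theorem isClosed_separatedColorings (r : ℕ → ℕ) (k : ℕ) (δ : ℝ) :
    IsClosed (separatedColorings r k δ) := by
  have hproj : separatedColorings r k δ = Prod.snd '' {p : (Fin k → UnitAddCircle) × (ℕ → Bool) |
      ∀ n n', p.2 n ≠ p.2 n' → ∃ j, δ ≤ ‖r n • p.1 j - r n' • p.1 j‖} := by
    ext s; simp [separatedColorings]
  rw [hproj]
  refine isClosedMap_snd_of_compactSpace _ ?_
  simp only [Set.ofPred_forall, imp_iff_not_or, not_not, Set.ofPred_or, Set.ofPred_exists]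
  refine isClosed_iInter fun n => isClosed_iInter fun n' => .union ?_ ?_
  · exact isClosed_eq (by fun_prop) (by fun_prop)
  · exact isClosed_iUnion_of_finite fun j => isClosed_le continuous_const (by fun_prop)

theorem separatedColorings_shift_eq_univ {r : ℕ → ℕ} {k : ℕ} {δ : ℝ} {x : ℕ → Bool} {N₀ : ℕ}
    (h : PiNat.cylinder x N₀ ⊆ separatedColorings r k δ) :
    separatedColorings (fun n => r (n + N₀)) k δ = Set.univ := by
  refine Set.eq_univ_of_forall fun s => ?_
  obtain ⟨α, hα⟩ := h (show (fun n => if n < N₀ then x n else s (n - N₀)) ∈ PiNat.cylinder x N₀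
    from fun i hi => if_pos hi)
  exact ⟨α, fun n n' hs => hα _ _ (by simpa using hs)⟩

def arcIndex {Q : ℕ} (hQ : 0 < Q) (x : ℝ) : Fin Q :=
  ⟨⌊Int.fract x * Q⌋₊, by
    rw [Nat.floor_lt (by have := Int.fract_nonneg x; positivity)]
    exact mul_lt_of_lt_one_left (by exact_mod_cast hQ) (Int.fract_lt_one x)⟩

theorem norm_coe_sub_arcIndex_lt {Q : ℕ} (hQ : 0 < Q) (x : ℝ) :
    ‖(x : UnitAddCircle) - (((arcIndex hQ x : ℕ) / Q : ℝ) : UnitAddCircle)‖ < 1 / Q := by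
  have hQ' : (0 : ℝ) < Q := by exact_mod_cast hQ
  have hlo : (⌊Int.fract x * Q⌋₊ / Q : ℝ) ≤ Int.fract x :=
    (div_le_iff₀ hQ').2 (Nat.floor_le (mul_nonneg (Int.fract_nonneg x) hQ'.le))
  have hhi : Int.fract x < ⌊Int.fract x * Q⌋₊ / Q + 1 / Q := by
    rw [← add_div, lt_div_iff₀ hQ']
    exact Nat.lt_floor_add_one _
  rw [← AddCircle.coe_fract, ← AddCircle.coe_sub]
  refine QuotientAddGroup.norm_mk_le_norm.trans_lt ?_
  rw [Real.norm_eq_abs, abs_lt, arcIndex]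
  constructor <;> linarith [one_div_pos.2 hQ']

theorem norm_sub_lt_of_arcIndex_eq {Q : ℕ} (hQ : 0 < Q) {x y : ℝ}
    (h : arcIndex hQ x = arcIndex hQ y) : ‖(x : UnitAddCircle) - y‖ < 2 / Q := by
  have hx := norm_coe_sub_arcIndex_lt hQ x
  have hy := norm_coe_sub_arcIndex_lt hQ y
  rw [h] at hx
  calc ‖(x : UnitAddCircle) - y‖
      ≤ ‖(x : UnitAddCircle) - (((arcIndex hQ y : ℕ) / Q : ℝ) : UnitAddCircle)‖
        + ‖(y : UnitAddCircle) - (((arcIndex hQ y : ℕ) / Q : ℝ) : UnitAddCircle)‖ := by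
        simpa only [dist_eq_norm] using dist_triangle_right (x : UnitAddCircle) y _
    _ < 1 / Q + 1 / Q := add_lt_add hx hy
    _ = 2 / Q := by ring

theorem norm_nsmul_sub_nsmul_le {E : Type*} [SeminormedAddCommGroup E] {m n R : ℕ}
    (hm : m ≤ R) (hn : n ≤ R) (α β : E) :
    ‖m • α - n • α‖ ≤ ‖m • β - n • β‖ + 2 * R * ‖α - β‖ := by
  have hR : ∀ l ≤ R, ‖l • (α - β)‖ ≤ R * ‖α - β‖ := fun l hl =>
    norm_nsmul_le.trans (by gcongr)
  calc ‖m • α - n • α‖ = ‖(m • β - n • β) + m • (α - β) - n • (α - β)‖ := by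
        rw [nsmul_sub, nsmul_sub]; abel_nf
    _ ≤ ‖m • β - n • β‖ + ‖m • (α - β)‖ + ‖n • (α - β)‖ :=
        norm_sub_le_of_le (norm_add_le _ _) le_rfl
    _ ≤ ‖m • β - n • β‖ + R * ‖α - β‖ + R * ‖α - β‖ := by gcongr <;> exact hR _ ‹_›
    _ = ‖m • β - n • β‖ + 2 * R * ‖α - β‖ := by ring

def arcPattern (r : ℕ → ℕ) {k P Q : ℕ} (hQ : 0 < Q) (t : Fin k → Fin P) (i : ℕ) :
    Fin k → Fin Q :=
  fun j => arcIndex hQ (r i * ((t j : ℕ) / P : ℝ))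

theorem exists_eq_comp_arcPattern {r : ℕ → ℕ} {k N P Q R : ℕ} {δ : ℝ} (hP : 0 < P) (hQ : 0 < Q)
    (hR : ∀ i < N, r i ≤ R) (hδ : 2 / Q + 2 * R / P ≤ δ) {s : ℕ → Bool}
    (hs : s ∈ separatedColorings r k δ) :
    ∃ (t : Fin k → Fin P) (c : (Fin k → Fin Q) → Bool),
      ∀ i : Fin N, s i = c (arcPattern r hQ t i) := by
  obtain ⟨α, hα⟩ := hs
  choose a ha using fun j => QuotientAddGroup.mk_surjective (α j)
  set t : Fin k → Fin P := fun j => arcIndex hP (a j)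
  have hfactor : Function.FactorsThrough (fun i : Fin N => s i)
      (fun i : Fin N => arcPattern r hQ t i) := by
    intro i i' hii'
    by_contra hne
    obtain ⟨j, hj⟩ := hα i i' hne
    set β : UnitAddCircle := (((t j : ℕ) / P : ℝ) : UnitAddCircle)
    have hβ : ‖r i • β - r i' • β‖ < 2 / Q := by
      simpa only [β, ← AddCircle.coe_nsmul, nsmul_eq_mul] using
        norm_sub_lt_of_arcIndex_eq hQ (congrFun hii' j)
    have hαβ : ‖α j - β‖ < 1 / P := ha j ▸ norm_coe_sub_arcIndex_lt hP (a j)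
    have hRαβ : 2 * R * ‖α j - β‖ ≤ 2 * R / P := by
      rw [← mul_one_div]; gcongr
    linarith [norm_nsmul_sub_nsmul_le (hR i i.isLt) (hR i' i'.isLt) (α j) β]
  exact ⟨t, Function.extend _ _ (fun _ => false), fun i => (hfactor.extend_apply _ i).symm⟩

theorem two_pow_le_of_separatedColorings_eq_univ {r : ℕ → ℕ} (hr : Monotone r) {k q N : ℕ}
    (hN : 0 < r N) (h : separatedColorings r k (1 / (q + 1)) = Set.univ) :
    2 ^ N ≤ (4 * (q + 1)) ^ k * 2 ^ (4 * (q + 1)) ^ k * r N ^ k := by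
  have hP : 0 < 4 * (q + 1) * r N := by positivity
  have hQ : 0 < 4 * (q + 1) := by positivity
  have hδ : 2 / ((4 * (q + 1) : ℕ) : ℝ) + 2 * r N / ((4 * (q + 1) * r N : ℕ) : ℝ)
      ≤ 1 / (q + 1) := by
    push_cast
    field_simp
    norm_num
  have hsurj : Function.Surjective fun tc : (Fin k → Fin (4 * (q + 1) * r N)) ×
      ((Fin k → Fin (4 * (q + 1))) → Bool) => fun i : Fin N => tc.2 (arcPattern r hQ tc.1 i) := by
    intro u
    obtain ⟨t, c, htc⟩ := exists_eq_comp_arcPattern (N := N) hP hQ (fun i hi => hr hi.le) hδ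
      (h ▸ Set.mem_univ fun n => if hn : n < N then u ⟨n, hn⟩ else false)
    exact ⟨(t, c), funext fun i => by simpa using (htc i).symm⟩
  calc 2 ^ N ≤ (4 * (q + 1) * r N) ^ k * 2 ^ (4 * (q + 1)) ^ k := by
        simpa using Fintype.card_le_of_surjective _ hsurj
    _ = (4 * (q + 1)) ^ k * 2 ^ (4 * (q + 1)) ^ k * r N ^ k := by rw [mul_pow]; ring

theorem eventually_mul_pow_lt_two_pow {r : ℕ → ℕ}
    (hr : Tendsto (fun n : ℕ => Real.log (r n) / n) atTop (𝓝 0)) (C k : ℕ) :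
    ∀ᶠ N in atTop, C * r N ^ k < 2 ^ N := by
  have hlog : Tendsto (fun N : ℕ => (Real.log C + k * Real.log (r N)) / N) atTop (𝓝 0) := by
    simpa [add_div, mul_div_assoc] using
      (tendsto_const_div_atTop_nhds_zero_nat (Real.log C)).add (hr.const_mul (k : ℝ))
  filter_upwards [hlog.eventually (gt_mem_nhds (Real.log_pos one_lt_two)),
    eventually_gt_atTop 0] with N hN hN0
  rcases (Nat.zero_le (C * r N ^ k)).eq_or_lt with h0 | hpos
  · rw [← h0]; positivity
  have hC : 0 < C := Nat.pos_of_mul_pos_right hpos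
  have hrk : 0 < r N ^ k := Nat.pos_of_mul_pos_left hpos
  rw [div_lt_iff₀ (by positivity)] at hN
  have : Real.log (C * r N ^ k : ℕ) < Real.log (2 ^ N : ℕ) := by
    rw [Nat.cast_mul, Real.log_mul (by positivity) (by positivity), Nat.cast_pow, Real.log_pow,
      Nat.cast_pow, Real.log_pow, Nat.cast_ofNat]
    linarith
  exact_mod_cast (Real.log_lt_log_iff (by positivity) (by positivity)).1 this

/-- Sublacunary sets are not `I₀`-sets. -/
theorem sublacunary_not_I0 (r : ℕ → ℕ) (hr : IsSublacunarySeq r) :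
    ¬ IsI0Set (Set.range r) := by
  obtain ⟨hpos, hmono, hlog⟩ := hr
  intro hI0
  obtain ⟨⟨k, q⟩, hint⟩ := nonempty_interior_of_iUnion_of_closed
    (fun p : ℕ × ℕ => isClosed_separatedColorings r p.1 _)
    (iUnion_separatedColorings_eq_univ hmono.injective hI0)
  obtain ⟨_, ⟨x, N₀, rfl⟩, -, hcyl⟩ := (PiNat.isTopologicalBasis_cylinders fun _ => Bool)
    |>.exists_subset_of_mem_open hint.some_mem isOpen_interior
  have huniv := separatedColorings_shift_eq_univ (hcyl.trans interior_subset)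
  set C := (4 * (q + 1)) ^ k * 2 ^ (4 * (q + 1)) ^ k
  obtain ⟨N, hN⟩ := ((tendsto_add_atTop_nat N₀).eventually
    (eventually_mul_pow_lt_two_pow hlog (C * 2 ^ N₀) k)).exists
  have hcount : 2 ^ N ≤ C * r (N + N₀) ^ k := two_pow_le_of_separatedColorings_eq_univ
    (hmono.monotone.comp fun _ _ h => Nat.add_le_add_right h N₀) (hpos (N + N₀)) huniv
  rw [pow_add] at hN
  linarith [Nat.mul_le_mul_right (2 ^ N₀) hcount]
end
end

section
/- (Hartman–Ryll-Nardzewski criterion) A set E ⊆ ℕ is an I_0-set if and only if every two disjoint subsets A, B ⊆ E are separable by a Bohr rotation. -/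
open Filter Topology

noncomputable section

/-! If `E` is `I₀`, interpolating the indicator of `A` on `E` by a trigonometric polynomial
`∑ⱼ cⱼ e^{2πi n aⱼ}` to within `1/4` yields a continuous `F` on `𝕋ᵏ` with `F (n • a)` near `1`
on `A` and near `0` on `B`; the preimages under `F` of the two small discs separate the orbit
closures.

Conversely, Urysohn's lemma on `𝕋ᵈ` and the density of the span of its characters show that the
indicator of any `A ⊆ E` relative to `E` extends to a Bohr almost periodic sequence bounded by `1`.
Rounding `f / C` to a finite `1/4`-net of the unit disc then writes a bounded `f` on `E` as a finite
combination of such indicators, up to an error `C / 2` and with sup norm `O(C)`. Iterating this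
halving step produces a uniformly convergent series of trigonometric polynomials equal to `f`
on `E`. -/

open Set Submodule UnitAddTorus

def trigChar (a : ℝ) (n : ℕ) : ℂ := Complex.exp (2 * Real.pi * Complex.I * n * a)

def trigPoly : Submodule ℂ (ℕ → ℂ) := span ℂ (range trigChar)

theorem mem_trigPoly_iff {ψ : ℕ → ℂ} : ψ ∈ trigPoly ↔ IsTrigPoly ψ := by
  rw [trigPoly, mem_span_set']
  constructor
  · rintro ⟨k, c, g, rfl⟩
    choose a ha using fun i => (g i).2
    exact ⟨k, c, a, fun n => by simp [← ha, trigChar]⟩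
  · rintro ⟨k, c, a, h⟩
    exact ⟨k, c, fun j => ⟨trigChar (a j), a j, rfl⟩, funext fun n => by simp [h, trigChar]⟩

theorem mFourier_nsmul_coe {ι : Type*} [Fintype ι] (m : ι → ℤ) (a : ι → ℝ) (n : ℕ) :
    mFourier m (n • fun i => (a i : UnitAddCircle)) = trigChar (∑ i, m i * a i) n := by
  simp only [mFourier, ContinuousMap.coe_mk, Pi.smul_apply, ← AddCircle.coe_nsmul,
    fourier_coe_apply, trigChar, ← Complex.exp_sum]
  congr 1
  push_cast
  rw [Finset.mul_sum]
  refine Finset.sum_congr rfl fun i _ => ?_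
  simp [nsmul_eq_mul]
  ring

def orbitEval {X : Type*} [TopologicalSpace X] [AddMonoid X] (α : X) : C(X, ℂ) →ₗ[ℂ] ℕ → ℂ where
  toFun F n := F (n • α)
  map_add' _ _ := rfl
  map_smul' _ _ := rfl

theorem span_mFourier_le_comap_orbitEval {ι : Type*} [Fintype ι] (α : UnitAddTorus ι) :
    span ℂ (range (mFourier (d := ι))) ≤ trigPoly.comap (orbitEval α) := by
  obtain ⟨a, rfl⟩ : ∃ a : ι → ℝ, (fun i => (a i : UnitAddCircle)) = α :=
    ⟨fun i => (α i).out, funext fun i => QuotientAddGroup.out_eq' (α i)⟩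
  rw [span_le]
  rintro _ ⟨m, rfl⟩
  exact subset_span ⟨_, funext (mFourier_nsmul_coe m a · |>.symm)⟩

theorem isBohrAP_orbit {ι : Type*} [Fintype ι] (G : C(UnitAddTorus ι, ℂ)) (α : UnitAddTorus ι) :
    IsBohrAP fun n => G (n • α) := by
  intro ε hε
  have hG : G ∈ closure (span ℂ (range (mFourier (d := ι))) : Set C(UnitAddTorus ι, ℂ)) := by
    rw [← Submodule.topologicalClosure_coe, span_mFourier_closure_eq_top]
    trivial
  obtain ⟨F, hF, hGF⟩ := Metric.mem_closure_iff.mp hG ε hε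
  refine ⟨orbitEval α F, mem_trigPoly_iff.mp (span_mFourier_le_comap_orbitEval α hF), fun n => ?_⟩
  rw [← dist_eq_norm]
  exact (ContinuousMap.dist_apply_le_dist _).trans_lt hGF

theorem IsTrigPoly.exists_continuous {φ : ℕ → ℂ} (hφ : IsTrigPoly φ) :
    ∃ (k : ℕ) (α : UnitAddTorus (Fin k)) (F : C(UnitAddTorus (Fin k), ℂ)),
      ∀ n, φ n = F (n • α) := by
  classical
  obtain ⟨k, c, a, h⟩ := hφ
  refine ⟨k, fun j => a j, ∑ j, c j • mFourier (Pi.single j 1), fun n => ?_⟩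
  simp [h, mFourier_nsmul_coe, Pi.single_apply, trigChar]

theorem separableByBohr_of_mapsTo {Y : Type*} [TopologicalSpace Y] {d : ℕ}
    {α : UnitAddTorus (Fin d)} {F : UnitAddTorus (Fin d) → Y} (hF : Continuous F)
    {S T : Set Y} (hS : IsClosed S) (hT : IsClosed T) (hST : Disjoint S T) {A B : Set ℕ}
    (hA : MapsTo (fun n : ℕ => F (n • α)) A S) (hB : MapsTo (fun n : ℕ => F (n • α)) B T) :
    SeparableByBohr A B := by
  refine ⟨d, α, disjoint_iff_inter_eq_empty.mp ((hST.preimage F).mono ?_ ?_)⟩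
  · exact closure_minimal (image_subset_iff.mpr hA) (hS.preimage hF)
  · exact closure_minimal (image_subset_iff.mpr hB) (hT.preimage hF)

theorem IsI0Set.separableByBohr {E A B : Set ℕ} (hE : IsI0Set E) (hA : A ⊆ E) (hB : B ⊆ E)
    (hAB : Disjoint A B) : SeparableByBohr A B := by
  obtain ⟨ψ, hψ, hψE⟩ := hE (A.indicator 1) ⟨1, fun n _ => by
    simpa using norm_indicator_le_norm_self (1 : ℕ → ℂ) (s := A) (a := n)⟩
  obtain ⟨φ, hφ, hψφ⟩ := hψ (1 / 4) (by norm_num)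
  obtain ⟨k, α, F, hF⟩ := hφ.exists_continuous
  refine separableByBohr_of_mapsTo (α := α) F.continuous Metric.isClosed_closedBall
    Metric.isClosed_closedBall (Metric.closedBall_disjoint_closedBall (x := 1) (y := 0)
      (δ := 1 / 4) (ε := 1 / 4) (by norm_num)) (fun n hn => ?_) (fun n hn => ?_)
  · have := hψφ n
    rw [hψE n (hA hn), indicator_of_mem hn, Pi.one_apply, hF, ← dist_eq_norm] at this
    exact (dist_comm _ _).trans_le this.le
  · have := hψφ n
    rw [hψE n (hB hn), indicator_of_notMem (hAB.notMem_of_mem_right hn), hF, ← dist_eq_norm] at this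
    exact (dist_comm _ _).trans_le this.le

theorem SeparableByBohr.exists_isBohrAP_indicator {A B : Set ℕ} (h : SeparableByBohr A B) :
    ∃ ψ : ℕ → ℂ, IsBohrAP ψ ∧ (∀ n, ‖ψ n‖ ≤ 1) ∧ EqOn ψ (A.indicator 1) (A ∪ B) := by
  obtain ⟨d, α, hAB⟩ := h
  obtain ⟨u, huB, huA, hu⟩ := exists_continuous_zero_one_of_isClosed isClosed_closure
    isClosed_closure (disjoint_iff_inter_eq_empty.mpr hAB).symm
  let G : C(UnitAddTorus (Fin d), ℂ) := ⟨fun x => (u x : ℂ), by fun_prop⟩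
  have hmem {C : Set ℕ} {n : ℕ} (hn : n ∈ C) : n • α ∈ closure ((fun n : ℕ => n • α) '' C) :=
    subset_closure (mem_image_of_mem _ hn)
  refine ⟨fun n => G (n • α), isBohrAP_orbit G α, fun n => ?_, fun n hn => ?_⟩
  · simpa [G, abs_le] using ⟨(hu _).1.trans' (by norm_num), (hu _).2⟩
  · rcases hn with hn | hn
    · simp [G, huA (hmem hn), hn]
    · have hnA : n ∉ A := fun hnA =>
        (disjoint_iff_inter_eq_empty.mpr hAB).notMem_of_mem_left (hmem hnA) (hmem hn)
      simp [G, huB (hmem hn), hnA]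

theorem exists_mem_trigPoly_near_of_mapsTo {E : Set ℕ}
    (hsep : ∀ A B : Set ℕ, A ⊆ E → B ⊆ E → Disjoint A B → SeparableByBohr A B)
    {g : ℕ → ℂ} {t : Finset ℂ} (hg : MapsTo g E t) {δ : ℝ} (hδ : 0 < δ) :
    ∃ φ ∈ trigPoly, (∀ n ∈ E, ‖g n - φ n‖ ≤ δ * ∑ z ∈ t, ‖z‖) ∧
      ∀ n, ‖φ n‖ ≤ (1 + δ) * ∑ z ∈ t, ‖z‖ := by
  have hlevel (z : ℂ) : ∃ φ ∈ trigPoly, (∀ n, ‖φ n‖ ≤ 1 + δ) ∧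
      ∀ n ∈ E, ‖(if g n = z then 1 else 0) - φ n‖ < δ := by
    let A := {n ∈ E | g n = z}
    obtain ⟨ψ, hψ, hψ1, hψA⟩ := (hsep A (E \ A) (sep_subset _ _) sdiff_subset
      disjoint_sdiff_right).exists_isBohrAP_indicator
    obtain ⟨φ, hφ, hψφ⟩ := hψ δ hδ
    refine ⟨φ, mem_trigPoly_iff.mpr hφ, fun n => ?_, fun n hn => ?_⟩
    · calc ‖φ n‖ ≤ ‖ψ n‖ + ‖ψ n - φ n‖ := norm_le_norm_add_norm_sub _ _
        _ ≤ 1 + δ := add_le_add (hψ1 n) (hψφ n).le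
    · have hnAB : n ∈ A ∪ (E \ A) := union_sdiff_cancel (sep_subset _ _) ▸ hn
      have : (if g n = z then 1 else 0) = ψ n := by
        rw [hψA hnAB]
        by_cases hgn : g n = z <;> simp [A, hn, hgn]
      exact this ▸ hψφ n
  choose φ hφ hφ1 hφE using hlevel
  refine ⟨∑ z ∈ t, z • φ z, sum_mem fun z _ => smul_mem _ _ (hφ z), fun n hn => ?_, fun n => ?_⟩
  · have hgn : g n = ∑ z ∈ t, z * (if g n = z then 1 else 0) := by
      have hgt : g n ∈ t := hg hn
      simp [hgt]
    calc ‖g n - (∑ z ∈ t, z • φ z) n‖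
        = ‖∑ z ∈ t, z * ((if g n = z then 1 else 0) - φ z n)‖ := by
          simp only [mul_sub, Finset.sum_sub_distrib, ← hgn, Finset.sum_apply, Pi.smul_apply,
            smul_eq_mul]
      _ ≤ ∑ z ∈ t, ‖z‖ * δ := norm_sum_le_of_le _ fun z _ => by
          rw [norm_mul]; exact mul_le_mul_of_nonneg_left (hφE z n hn).le (norm_nonneg z)
      _ = δ * ∑ z ∈ t, ‖z‖ := by rw [Finset.mul_sum]; simp [mul_comm]
  · calc ‖(∑ z ∈ t, z • φ z) n‖ = ‖∑ z ∈ t, z * φ z n‖ := by simp [Finset.sum_apply]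
      _ ≤ ∑ z ∈ t, ‖z‖ * (1 + δ) := norm_sum_le_of_le _ fun z _ => by
          rw [norm_mul]; exact mul_le_mul_of_nonneg_left (hφ1 z n) (norm_nonneg z)
      _ = (1 + δ) * ∑ z ∈ t, ‖z‖ := by rw [Finset.mul_sum]; simp [mul_comm]

theorem exists_mem_trigPoly_halving {E : Set ℕ}
    (hsep : ∀ A B : Set ℕ, A ⊆ E → B ⊆ E → Disjoint A B → SeparableByBohr A B) :
    ∃ K : ℝ, ∀ (f : ℕ → ℂ) (C : ℝ), 0 < C → (∀ n ∈ E, ‖f n‖ ≤ C) →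
      ∃ φ ∈ trigPoly, (∀ n ∈ E, ‖f n - φ n‖ ≤ C / 2) ∧ ∀ n, ‖φ n‖ ≤ K * C := by
  obtain ⟨t, -, ht⟩ := (isCompact_closedBall (0 : ℂ) 1).elim_nhds_subcover
    (fun z => Metric.ball z (1 / 4)) fun z _ => Metric.ball_mem_nhds z (by norm_num)
  have hcover (w : ℂ) (hw : w ∈ Metric.closedBall 0 1) : ∃ z ∈ t, dist w z < 1 / 4 := by
    simpa using ht hw
  choose! q hqt hq using hcover
  set S := ∑ z ∈ t, ‖z‖
  have hS : 0 ≤ S := Finset.sum_nonneg fun z _ => norm_nonneg z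
  set δ := 1 / (4 * (S + 1))
  have hδ : 0 < δ := by positivity
  have hδS : δ * S ≤ 1 / 4 := by
    rw [div_mul_eq_mul_div, div_le_div_iff₀ (by positivity) (by norm_num)]
    nlinarith
  refine ⟨2 * S, fun f C hC hf => ?_⟩
  have hball (n : ℕ) (hn : n ∈ E) : f n / C ∈ Metric.closedBall 0 1 := by
    rw [mem_closedBall_zero_iff, norm_div, Complex.norm_of_nonneg hC.le, div_le_one hC]
    exact hf n hn
  obtain ⟨φ, hφ, hφE, hφ1⟩ := exists_mem_trigPoly_near_of_mapsTo hsep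
    (g := fun n => q (f n / C)) (fun n hn => hqt _ (hball n hn)) hδ
  have hCn : ‖(C : ℂ)‖ = C := Complex.norm_of_nonneg hC.le
  refine ⟨(C : ℂ) • φ, smul_mem _ _ hφ, fun n hn => ?_, fun n => ?_⟩
  · have hsplit :
        f n - ((C : ℂ) • φ) n = C * ((f n / C - q (f n / C)) + (q (f n / C) - φ n)) := by
      rw [Pi.smul_apply, smul_eq_mul, mul_add, mul_sub, mul_sub,
        mul_div_cancel₀ _ (Complex.ofReal_ne_zero.mpr hC.ne')]
      ring
    calc ‖f n - ((C : ℂ) • φ) n‖ ≤ C * (1 / 4 + δ * S) := by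
          rw [hsplit, norm_mul, hCn]
          gcongr
          refine (norm_add_le _ _).trans (add_le_add ?_ (hφE n hn))
          exact (dist_eq_norm (f n / C) _ ▸ hq _ (hball n hn)).le
      _ ≤ C / 2 := by nlinarith
  · calc ‖((C : ℂ) • φ) n‖ = C * ‖φ n‖ := by rw [Pi.smul_apply, norm_smul, hCn]
      _ ≤ C * ((1 + δ) * S) := by gcongr; exact hφ1 n
      _ ≤ C * (2 * S) := by
          have : δ ≤ 1 := by
            rw [div_le_one (by positivity)]; linarith
          gcongr; linarith
      _ = 2 * S * C := by ring

theorem tendsto_const_div_two_pow (c : ℝ) : Tendsto (fun m : ℕ => c / 2 ^ m) atTop (𝓝 0) :=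
  tendsto_const_nhds.div_atTop (tendsto_pow_atTop_atTop_of_one_lt one_lt_two)

theorem exists_eqOn_of_halving {X G S : Type*} [NormedAddCommGroup G] [CompleteSpace G]
    [SetLike S (X → G)] [AddSubmonoidClass S (X → G)] {s : S} {E : Set X} {K : ℝ}
    (hstep : ∀ (f : X → G) (C : ℝ), 0 < C → (∀ x ∈ E, ‖f x‖ ≤ C) →
      ∃ φ ∈ s, (∀ x ∈ E, ‖f x - φ x‖ ≤ C / 2) ∧ ∀ x, ‖φ x‖ ≤ K * C)
    {f : X → G} {C : ℝ} (hC : 0 < C) (hf : ∀ x ∈ E, ‖f x‖ ≤ C) :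
    ∃ ψ : X → G, (∀ ε > 0, ∃ φ ∈ s, ∀ x, ‖ψ x - φ x‖ < ε) ∧ EqOn ψ f E := by
  choose! next hnext_mem hnext_approx hnext_bound using hstep
  -- `g m` is the remainder after `m` halving steps, `φ m` the correction made at step `m`.
  let g : ℕ → X → G := fun m => Nat.rec f (fun m h => h - next h (C / 2 ^ m)) m
  let φ : ℕ → X → G := fun m => next (g m) (C / 2 ^ m)
  have hg : ∀ m, ∀ x ∈ E, ‖g m x‖ ≤ C / 2 ^ m := by
    intro m
    induction m with
    | zero => rw [pow_zero, div_one]; exact hf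
    | succ m ih =>
      intro x hx
      rw [pow_succ, ← div_div]
      exact hnext_approx _ _ (by positivity) ih x hx
  have hφ_mem (m : ℕ) : φ m ∈ s := hnext_mem _ _ (by positivity) (hg m)
  have hφ_bound (m : ℕ) (x : X) : ‖φ m x‖ ≤ 2 * K * C / 2 / 2 ^ m := by
    have := hnext_bound _ _ (by positivity) (hg m) x
    exact this.trans_eq (by ring)
  have hsum (x : X) : Summable fun m => φ m x :=
    (hasSum_geometric_two' _).summable.of_norm_bounded (hφ_bound · x)
  have hpartial (m : ℕ) (x : X) : ∑ i ∈ Finset.range m, φ i x = f x - g m x := by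
    induction m with
    | zero => simp [g]
    | succ m ih =>
      rw [Finset.sum_range_succ, ih]
      show _ = f x - (g m x - φ m x)
      abel
  refine ⟨fun x => ∑' m, φ m x, fun ε hε => ?_, fun x hx => ?_⟩
  · obtain ⟨m, hm⟩ := ((tendsto_const_div_two_pow (2 * K * C)).eventually (gt_mem_nhds hε)).exists
    refine ⟨∑ i ∈ Finset.range m, φ i, sum_mem fun i _ => hφ_mem i, fun x => ?_⟩
    dsimp only
    rw [Finset.sum_apply, ← (hsum x).sum_add_tsum_nat_add m, add_sub_cancel_left]
    refine (tsum_of_norm_bounded (hasSum_geometric_two' _) fun i => ?_).trans_lt hm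
    refine (hφ_bound (i + m) x).trans_eq ?_
    rw [pow_add]
    field_simp
  · refine tendsto_nhds_unique (hsum x).hasSum.tendsto_sum_nat ?_
    simp_rw [hpartial]
    have hg0 : Tendsto (fun m => g m x) atTop (𝓝 0) :=
      squeeze_zero_norm (fun m => hg m x hx) (tendsto_const_div_two_pow C)
    simpa using tendsto_const_nhds.sub hg0

theorem isI0Set_of_separable {E : Set ℕ}
    (hsep : ∀ A B : Set ℕ, A ⊆ E → B ⊆ E → Disjoint A B → SeparableByBohr A B) :
    IsI0Set E := by
  rintro f ⟨C, hC⟩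
  obtain ⟨K, hK⟩ := exists_mem_trigPoly_halving hsep
  obtain ⟨ψ, hψ, hψf⟩ := exists_eqOn_of_halving hK (C := |C| + 1) (by positivity)
    fun n hn => (hC n hn).trans (by linarith [le_abs_self C])
  refine ⟨ψ, fun ε hε => ?_, hψf⟩
  obtain ⟨φ, hφ, hψφ⟩ := hψ ε hε
  exact ⟨φ, mem_trigPoly_iff.mp hφ, hψφ⟩

/-- Hartman–Ryll-Nardzewski criterion: `E` is an `I₀`-set iff every two disjoint
subsets of `E` are separable by a Bohr rotation. -/
theorem I0_iff_separable (E : Set ℕ) :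
    IsI0Set E ↔
      ∀ A B : Set ℕ, A ⊆ E → B ⊆ E → Disjoint A B → SeparableByBohr A B :=
  ⟨fun hE _ _ hA hB hAB => hE.separableByBohr hA hB hAB, isI0Set_of_separable⟩
end
end

section
/- Let R ⊆ ℕ be a set of Bohr recurrence. Then for every d ∈ ℕ and every ε > 0 there exists a finite subset R_ε ⊆ R such that for every α ∈ 𝕋^d = (ℝ/ℤ)^d there exists r ∈ R_ε with ‖rα‖_{𝕋^d} < ε, where ‖β‖_{𝕋^d} denotes the maximum over the d coordinates of the distance from that coordinate of β to 0 in ℝ/ℤ. (This is the 1-step, torus, case of the paper's compactness lemma for sets of pointwise nilrecurrence.) -/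
open Filter Topology

noncomputable section

theorem exists_finset_forall_exists_mem_of_forall_mem_closure_image {ι X Y : Type*}
    [TopologicalSpace X] [CompactSpace X] [TopologicalSpace Y]
    (f : ι → X → Y) (hf : ∀ i, Continuous (f i)) (R : Set ι) {y : Y}
    (hy : ∀ x, y ∈ closure ((fun i => f i x) '' R)) {U : Set Y} (hU : IsOpen U) (hyU : y ∈ U) :
    ∃ t : Finset ι, ↑t ⊆ R ∧ ∀ x, ∃ i ∈ t, f i x ∈ U := by
  have hcover : (Set.univ : Set X) ⊆ ⋃ i ∈ R, f i ⁻¹' U := by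
    intro x _
    obtain ⟨_, hiU, i, hiR, rfl⟩ := mem_closure_iff.1 (hy x) U hU hyU
    exact Set.mem_biUnion hiR hiU
  obtain ⟨t, htR, htfin, htcover⟩ :=
    isCompact_univ.elim_finite_subcover_image (fun i _ => hU.preimage (hf i)) hcover
  refine ⟨htfin.toFinset, by simpa using htR, fun x => ?_⟩
  obtain ⟨i, hit, hiU⟩ := Set.mem_iUnion₂.1 (htcover (Set.mem_univ x))
  exact ⟨i, htfin.mem_toFinset.2 hit, hiU⟩

/-- Compactness lemma: for a set of Bohr recurrence `R`, every `d` and `ε > 0`, there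
is a finite subset `Rε ⊆ R` such that every `α ∈ 𝕋^d` comes `ε`-close to `0` along
some `r ∈ Rε`. -/
theorem bohrRecurrence_finite_subset (R : Set ℕ) (hR : IsBohrRecurrence R)
    (d : ℕ) (ε : ℝ) (hε : 0 < ε) :
    ∃ Rε : Finset ℕ, ↑Rε ⊆ R ∧
      ∀ α : Fin d → AddCircle (1 : ℝ), ∃ r ∈ Rε, dist (r • α) (0 : Fin d → AddCircle (1 : ℝ)) < ε :=
  exists_finset_forall_exists_mem_of_forall_mem_closure_image (fun (r : ℕ) α => r • α)
    (fun r => continuous_nsmul r) R (hR d) Metric.isOpen_ball (Metric.mem_ball_self hε)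
end
end

section
/- Let A, B, C ⊆ ℕ. Suppose that A and B are separable by a Bohr rotation and A and C are separable by a Bohr rotation. Then A and B ∪ C are separable by a Bohr rotation. (This is the 1-step, Bohr, case of the paper's lemma on separating a set from a union.) -/
open Filter Topology

noncomputable section

/-
A common limit point of `A` and `B ∪ C` under the rotation by `(α, β)` on `𝕋^(d₁ + d₂)` would
project, under the continuous coordinate homomorphisms, to a common limit point of `A` and `B`
under `α` or of `A` and `C` under `β`.
-/

theorem disjoint_closure_nsmul_image_of_map {M N : Type*} [AddMonoid M] [TopologicalSpace M]
    [AddMonoid N] [TopologicalSpace N] (f : M →+ N) (hf : Continuous f) {α : M} {A B : Set ℕ}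
    (h : Disjoint (closure ((fun n : ℕ => n • f α) '' A))
      (closure ((fun n : ℕ => n • f α) '' B))) :
    Disjoint (closure ((fun n : ℕ => n • α) '' A)) (closure ((fun n : ℕ => n • α) '' B)) := by
  have hmap (D : Set ℕ) : f '' ((fun n : ℕ => n • α) '' D) = (fun n : ℕ => n • f α) '' D := by
    simp only [Set.image_image, map_nsmul]
  refine (h.preimage f).mono ?_ ?_ <;>
    exact (closure_subset_preimage_closure_image hf).trans (by rw [hmap])

theorem disjoint_closure_nsmul_image_of_comp {ι κ G : Type*} [AddMonoid G]
    [TopologicalSpace G] (e : κ → ι) {α : ι → G} {A B : Set ℕ}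
    (h : Disjoint (closure ((fun n : ℕ => n • (α ∘ e)) '' A))
      (closure ((fun n : ℕ => n • (α ∘ e)) '' B))) :
    Disjoint (closure ((fun n : ℕ => n • α) '' A)) (closure ((fun n : ℕ => n • α) '' B)) :=
  disjoint_closure_nsmul_image_of_map
    { toFun := (· ∘ e), map_zero' := rfl, map_add' := fun _ _ => rfl }
    (continuous_pi fun k => continuous_apply (e k)) h

/-- If `A` is separable by Bohr rotations from `B` and from `C`, then `A` is separable
by a Bohr rotation from `B ∪ C`. -/
theorem separable_union (A B C : Set ℕ) (hAB : SeparableByBohr A B)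
    (hAC : SeparableByBohr A C) : SeparableByBohr A (B ∪ C) := by
  obtain ⟨d₁, α, hα⟩ := hAB
  obtain ⟨d₂, β, hβ⟩ := hAC
  refine ⟨d₁ + d₂, Fin.append α β, ?_⟩
  rw [← Set.disjoint_iff_inter_eq_empty] at hα hβ ⊢
  rw [Set.image_union, closure_union, Set.disjoint_union_right]
  have hleft : Fin.append α β ∘ Fin.castAdd d₂ = α := funext (Fin.append_left α β)
  have hright : Fin.append α β ∘ Fin.natAdd d₁ = β := funext (Fin.append_right α β)
  exact ⟨disjoint_closure_nsmul_image_of_comp (Fin.castAdd d₂) (by rwa [hleft]),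
    disjoint_closure_nsmul_image_of_comp (Fin.natAdd d₁) (by rwa [hright])⟩
end
end

section
/- If E ⊆ ℕ and F ⊆ ℕ are both I_0-sets and E and F are separable by a Bohr rotation, then E ∪ F is an I_0-set. (This is the 1-step, Bohr, case of the paper's lemma on unions of separable interpolation sets.) -/
open Filter Topology

noncomputable section

/-!
Bohr almost periodic sequences are the closure of the trigonometric polynomials in `ℓ^∞(ℕ)`, hence
form an algebra. If `Eα` and `Fα` have disjoint closures in `𝕋^d`, Urysohn's lemma gives a
continuous `u : 𝕋^d → [0, 1]` equal to `1` on `Eα` and to `0` on `Fα`, and by Stone–Weierstrass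
`χ n = u (n α)` is Bohr almost periodic. Interpolating `f` on `E` by `ψ_E` and on `F` by `ψ_F`,
the sequence `ψ_E χ + ψ_F (1 - χ)` interpolates `f` on `E ∪ F`.
-/

namespace IsTrigPoly

theorem const (z : ℂ) : IsTrigPoly fun _ => z :=
  ⟨1, fun _ => z, fun _ => 0, fun n => by simp⟩

theorem add {ψ₁ ψ₂ : ℕ → ℂ} (h₁ : IsTrigPoly ψ₁) (h₂ : IsTrigPoly ψ₂) :
    IsTrigPoly (ψ₁ + ψ₂) := by
  obtain ⟨k₁, c₁, a₁, h₁⟩ := h₁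
  obtain ⟨k₂, c₂, a₂, h₂⟩ := h₂
  refine ⟨k₁ + k₂, Fin.append c₁ c₂, Fin.append a₁ a₂, fun n => ?_⟩
  simp only [Fin.sum_univ_add, Fin.append_left, Fin.append_right, Pi.add_apply, h₁, h₂]

theorem mul {ψ₁ ψ₂ : ℕ → ℂ} (h₁ : IsTrigPoly ψ₁) (h₂ : IsTrigPoly ψ₂) :
    IsTrigPoly (ψ₁ * ψ₂) := by
  obtain ⟨k₁, c₁, a₁, h₁⟩ := h₁
  obtain ⟨k₂, c₂, a₂, h₂⟩ := h₂
  let e : Fin k₁ × Fin k₂ ≃ Fin (k₁ * k₂) := finProdFinEquiv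
  refine ⟨k₁ * k₂, fun j => c₁ (e.symm j).1 * c₂ (e.symm j).2,
    fun j => a₁ (e.symm j).1 + a₂ (e.symm j).2, fun n => ?_⟩
  rw [Pi.mul_apply, h₁, h₂, Finset.sum_mul_sum, ← e.sum_comp, ← Finset.sum_product']
  refine Finset.sum_congr rfl fun i _ => ?_
  simp only [Equiv.symm_apply_apply, mul_mul_mul_comm, ← Complex.exp_add]
  push_cast
  ring_nf

theorem conj {ψ : ℕ → ℂ} (h : IsTrigPoly ψ) : IsTrigPoly fun n => starRingEnd ℂ (ψ n) := by
  obtain ⟨k, c, a, h⟩ := h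
  refine ⟨k, fun j => starRingEnd ℂ (c j), fun j => -a j, fun n => ?_⟩
  dsimp only
  rw [h, map_sum]
  refine Finset.sum_congr rfl fun j _ => ?_
  rw [map_mul, ← Complex.exp_conj]
  simp only [map_mul, Complex.conj_I, Complex.conj_ofReal, map_ofNat, map_natCast]
  push_cast
  ring_nf

theorem exists_bound {ψ : ℕ → ℂ} (h : IsTrigPoly ψ) : ∃ C, ∀ n, ‖ψ n‖ ≤ C := by
  obtain ⟨k, c, a, h⟩ := h
  refine ⟨∑ j, ‖c j‖, fun n => (h n ▸ norm_sum_le _ _).trans (Finset.sum_le_sum fun j _ => ?_)⟩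
  have : 2 * Real.pi * Complex.I * n * a j = ((2 * Real.pi * n * a j : ℝ) : ℂ) * Complex.I := by
    push_cast
    ring
  rw [norm_mul, this, Complex.norm_exp_ofReal_mul_I, mul_one]

end IsTrigPoly

theorem IsBohrAP.exists_bound {ψ : ℕ → ℂ} (h : IsBohrAP ψ) : ∃ C, ∀ n, ‖ψ n‖ ≤ C := by
  obtain ⟨φ, hφ, hψφ⟩ := h 1 one_pos
  obtain ⟨C, hC⟩ := hφ.exists_bound
  refine ⟨1 + C, fun n => ?_⟩
  calc ‖ψ n‖ = ‖(ψ n - φ n) + φ n‖ := by rw [sub_add_cancel]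
    _ ≤ 1 + C := (norm_add_le _ _).trans (add_le_add (hψφ n).le (hC n))

open BoundedContinuousFunction in
def trigPolySubalgebra : Subalgebra ℂ (ℕ →ᵇ ℂ) where
  carrier := {φ | IsTrigPoly φ}
  mul_mem' h₁ h₂ := by simpa only [Set.mem_ofPred_eq, coe_mul] using h₁.mul h₂
  add_mem' h₁ h₂ := by simpa only [Set.mem_ofPred_eq, coe_add] using h₁.add h₂
  algebraMap_mem' z := IsTrigPoly.const z

theorem isBohrAP_iff_exists_mem_topologicalClosure {ψ : ℕ → ℂ} :
    IsBohrAP ψ ↔ ∃ φ ∈ trigPolySubalgebra.topologicalClosure, ⇑φ = ψ := by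
  simp only [← SetLike.mem_coe, Subalgebra.topologicalClosure_coe, Metric.mem_closure_iff]
  constructor
  · intro h
    obtain ⟨C, hC⟩ := h.exists_bound
    refine ⟨.ofNormedAddCommGroupDiscrete ψ C hC, fun ε hε => ?_, rfl⟩
    obtain ⟨φ, hφ, hψφ⟩ := h (ε / 2) (half_pos hε)
    obtain ⟨D, hD⟩ := hφ.exists_bound
    refine ⟨.ofNormedAddCommGroupDiscrete φ D hD, hφ, lt_of_le_of_lt ?_ (half_lt_self hε)⟩
    exact (BoundedContinuousFunction.dist_le (half_pos hε).le).2 fun n =>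
      (dist_eq_norm _ _).trans_le (hψφ n).le
  · rintro ⟨φ, hφ, rfl⟩ ε hε
    obtain ⟨p, hp, hφp⟩ := hφ ε hε
    exact ⟨p, hp, fun n => (dist_eq_norm (φ n) (p n) ▸
      BoundedContinuousFunction.dist_coe_le_dist n).trans_lt hφp⟩

namespace IsBohrAP

variable {ψ₁ ψ₂ : ℕ → ℂ}

theorem one : IsBohrAP 1 :=
  isBohrAP_iff_exists_mem_topologicalClosure.2 ⟨1, one_mem _, BoundedContinuousFunction.coe_one⟩

theorem add (h₁ : IsBohrAP ψ₁) (h₂ : IsBohrAP ψ₂) : IsBohrAP (ψ₁ + ψ₂) := by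
  obtain ⟨φ₁, hφ₁, rfl⟩ := isBohrAP_iff_exists_mem_topologicalClosure.1 h₁
  obtain ⟨φ₂, hφ₂, rfl⟩ := isBohrAP_iff_exists_mem_topologicalClosure.1 h₂
  exact isBohrAP_iff_exists_mem_topologicalClosure.2
    ⟨φ₁ + φ₂, add_mem hφ₁ hφ₂, BoundedContinuousFunction.coe_add _ _⟩

theorem sub (h₁ : IsBohrAP ψ₁) (h₂ : IsBohrAP ψ₂) : IsBohrAP (ψ₁ - ψ₂) := by
  obtain ⟨φ₁, hφ₁, rfl⟩ := isBohrAP_iff_exists_mem_topologicalClosure.1 h₁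
  obtain ⟨φ₂, hφ₂, rfl⟩ := isBohrAP_iff_exists_mem_topologicalClosure.1 h₂
  exact isBohrAP_iff_exists_mem_topologicalClosure.2
    ⟨φ₁ - φ₂, sub_mem hφ₁ hφ₂, BoundedContinuousFunction.coe_sub _ _⟩

theorem mul (h₁ : IsBohrAP ψ₁) (h₂ : IsBohrAP ψ₂) : IsBohrAP (ψ₁ * ψ₂) := by
  obtain ⟨φ₁, hφ₁, rfl⟩ := isBohrAP_iff_exists_mem_topologicalClosure.1 h₁
  obtain ⟨φ₂, hφ₂, rfl⟩ := isBohrAP_iff_exists_mem_topologicalClosure.1 h₂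
  exact isBohrAP_iff_exists_mem_topologicalClosure.2
    ⟨φ₁ * φ₂, mul_mem hφ₁ hφ₂, BoundedContinuousFunction.coe_mul _ _⟩

end IsBohrAP

instance fact_zero_lt_one_real : Fact ((0 : ℝ) < 1) := ⟨one_pos⟩

section Torus

variable {ι : Type*}

def coordinateCharacter (j : ι) : C(ι → AddCircle (1 : ℝ), ℂ) :=
  (fourier 1).comp (ContinuousMap.eval j)

theorem isTrigPoly_comp_nsmul_of_mem_adjoin (α : ι → AddCircle (1 : ℝ))
    {p : C(ι → AddCircle (1 : ℝ), ℂ)}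
    (hp : p ∈ StarAlgebra.adjoin ℂ (Set.range coordinateCharacter)) :
    IsTrigPoly fun n => p (n • α) := by
  induction hp using StarAlgebra.adjoin_induction with
  | mem p hp =>
    obtain ⟨j, rfl⟩ := hp
    obtain ⟨a, ha⟩ := QuotientAddGroup.mk_surjective (α j)
    refine ⟨1, fun _ => 1, fun _ => a, fun n => ?_⟩
    have : (n • α) j = ((n • a : ℝ) : AddCircle (1 : ℝ)) := by
      rw [Pi.smul_apply, ← ha]
      exact (QuotientAddGroup.mk_nsmul _ a n).symm
    simp only [coordinateCharacter, ContinuousMap.comp_apply, ContinuousMap.eval_apply, this,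
      fourier_coe_apply, Finset.univ_unique, Finset.sum_singleton, one_mul, nsmul_eq_mul]
    push_cast
    ring_nf
  | algebraMap z => exact IsTrigPoly.const z
  | add p q _ _ hp hq => exact hp.add hq
  | mul p q _ _ hp hq => exact hp.mul hq
  | star p _ hp => exact hp.conj

theorem topologicalClosure_adjoin_range_coordinateCharacter :
    (StarAlgebra.adjoin ℂ (Set.range (coordinateCharacter (ι := ι)))).topologicalClosure = ⊤ := by
  refine ContinuousMap.starSubalgebra_topologicalClosure_eq_top_of_separatesPoints _ ?_
  intro x y hxy
  obtain ⟨j, hj⟩ := Function.ne_iff.mp hxy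
  refine ⟨_, ⟨_, StarAlgebra.subset_adjoin ℂ _ ⟨j, rfl⟩, rfl⟩, fun h => hj ?_⟩
  simp only [coordinateCharacter, ContinuousMap.comp_apply, ContinuousMap.eval_apply,
    fourier_one, Circle.coe_inj] at h
  exact AddCircle.injective_toCircle one_ne_zero h

theorem ContinuousMap.isBohrAP_comp_nsmul (g : C(ι → AddCircle (1 : ℝ), ℂ))
    (α : ι → AddCircle (1 : ℝ)) : IsBohrAP fun n => g (n • α) := by
  have hg : g ∈ closure (StarAlgebra.adjoin ℂ (Set.range (coordinateCharacter (ι := ι))) :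
      Set C(ι → AddCircle (1 : ℝ), ℂ)) := by
    rw [← StarSubalgebra.topologicalClosure_coe,
      topologicalClosure_adjoin_range_coordinateCharacter]
    trivial
  intro ε hε
  obtain ⟨p, hp, hgp⟩ := Metric.mem_closure_iff.mp hg ε hε
  exact ⟨fun n => p (n • α), isTrigPoly_comp_nsmul_of_mem_adjoin α hp, fun n =>
    (dist_eq_norm (g (n • α)) (p (n • α)) ▸ ContinuousMap.dist_apply_le_dist _).trans_lt hgp⟩

end Torus

theorem SeparableByBohr.exists_isBohrAP_eqOn_one_eqOn_zero {A B : Set ℕ}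
    (h : SeparableByBohr A B) : ∃ χ : ℕ → ℂ, IsBohrAP χ ∧ Set.EqOn χ 1 A ∧ Set.EqOn χ 0 B := by
  obtain ⟨d, α, hAB⟩ := h
  obtain ⟨u, hu0, hu1, -⟩ := exists_continuous_zero_one_of_isClosed isClosed_closure
    isClosed_closure (Set.disjoint_iff_inter_eq_empty.2 hAB).symm
  refine ⟨fun n => u (n • α), ContinuousMap.isBohrAP_comp_nsmul
    ((ContinuousMap.mk ((↑) : ℝ → ℂ) Complex.continuous_ofReal).comp u) α, ?_, ?_⟩
  · intro n hn
    simp [hu1 (subset_closure (Set.mem_image_of_mem _ hn))]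
  · intro n hn
    simp [hu0 (subset_closure (Set.mem_image_of_mem _ hn))]

/-- If `E` and `F` are `I₀`-sets separable by a Bohr rotation, then `E ∪ F` is an
`I₀`-set. -/
theorem I0_union_of_separable (E F : Set ℕ) (hE : IsI0Set E) (hF : IsI0Set F)
    (hsep : SeparableByBohr E F) : IsI0Set (E ∪ F) := by
  rintro f ⟨C, hC⟩
  obtain ⟨χ, hχ, hχE, hχF⟩ := hsep.exists_isBohrAP_eqOn_one_eqOn_zero
  obtain ⟨ψE, hψE, hfE⟩ := hE f ⟨C, fun n hn => hC n (Or.inl hn)⟩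
  obtain ⟨ψF, hψF, hfF⟩ := hF f ⟨C, fun n hn => hC n (Or.inr hn)⟩
  refine ⟨ψE * χ + ψF * (1 - χ), (hψE.mul hχ).add (hψF.mul (IsBohrAP.one.sub hχ)), ?_⟩
  rintro n (hn | hn)
  · simp [hχE hn, hfE n hn]
  · simp [hχF hn, hfF n hn]
end
end

section
/- Fix integers k ≥ 2 and m ≥ 1 and polynomials P_1, …, P_{m−1}, where P_i ∈ ℚ[s_1,…,s_i,t_1,…,t_i] has total degree at most k−1. Define the operation * on ℝ^m and the powers x^{*n} as in the context. Then there exist a polynomial R ∈ ℝ[x] with all coefficients nonnegative and, for every n ∈ ℕ and 1 ≤ i ≤ m, polynomials Q_{i,n} ∈ ℚ[x_1,…,x_m] such that: (a) for every x ∈ ℝ^m, x^{*n} = (Q_{1,n}(x), …, Q_{m,n}(x)); (b) each Q_{i,n} has total degree less than k^m; (c) for each i and n, the sum of the absolute values of the coefficients of Q_{i,n} is at most R(n). -/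
/-!
The coordinates of `x^{*(n+1)} = x * x^{*n}` obey the polynomial recursion
`Q_{n+1,i} = X_i + Q_{n,i} + P_i(X, Q_n)`, and it is triangular: `P_i` only involves
coordinates of index `< i`. Substituting polynomials of degree `≤ k^{i-1}` into `P_i`, of degree
`≤ k - 1`, gives degree `≤ k^i`, so every coordinate has degree `≤ k^{m-1} < k^m` for all `n`.

For the coefficients, the `ℓ¹`-norm of coefficient vectors is subadditive and
submultiplicative, so `‖Q_{n+1,i}‖ ≤ ‖Q_{n,i}‖ + 1 + ‖P_i‖ M_n^{deg P_i}`, where `M_n` bounds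
the norms of the lower coordinates. By induction on `i` these increments grow polynomially in `n`,
hence so does `‖Q_{n,i}‖`.
-/

open Filter Topology

noncomputable section

/-- The Mal'cev multiplication law on `ℝ^m` determined by the polynomials `P i`:
`(s * t) i = s i + t i + P i (s, t)`.  (With `P 0 = 0` this matches
`(s*t)_1 = s_1 + t_1`.) -/
noncomputable def malStar {m : ℕ} (P : Fin m → MvPolynomial (Fin m ⊕ Fin m) ℚ)
    (s t : Fin m → ℝ) : Fin m → ℝ :=
  fun i => s i + t i + MvPolynomial.aeval (Sum.elim s t) (P i)

/-- `malPow P x n = x^{*n}` for `n ≥ 1` (with the junk value `x` at `n = 0`):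
`x^{*1} = x` and `x^{*(n+1)} = x * x^{*n}`. -/
noncomputable def malPow {m : ℕ} (P : Fin m → MvPolynomial (Fin m ⊕ Fin m) ℚ)
    (x : Fin m → ℝ) : ℕ → (Fin m → ℝ)
  | 0 => x
  | 1 => x
  | (n + 2) => malStar P x (malPow P x (n + 1))

open MvPolynomial

namespace MvPolynomial

section l1Norm

variable {σ τ R : Type*} [CommRing R] [LinearOrder R] [IsStrictOrderedRing R]

def l1Norm (p : MvPolynomial σ R) : R := ∑ c ∈ p.support, |p.coeff c|

lemma l1Norm_nonneg (p : MvPolynomial σ R) : 0 ≤ l1Norm p :=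
  Finset.sum_nonneg fun _ _ => abs_nonneg _

lemma l1Norm_eq_sum_of_support_subset {p : MvPolynomial σ R} {s : Finset (σ →₀ ℕ)}
    (h : p.support ⊆ s) : l1Norm p = ∑ c ∈ s, |p.coeff c| :=
  Finset.sum_subset h fun c _ hc => by rw [notMem_support_iff.mp hc, abs_zero]

@[simp]
lemma l1Norm_zero : l1Norm (0 : MvPolynomial σ R) = 0 := by simp [l1Norm]

@[simp]
lemma l1Norm_monomial (s : σ →₀ ℕ) (a : R) : l1Norm (monomial s a) = |a| := by
  classical
  rw [l1Norm_eq_sum_of_support_subset support_monomial_subset, Finset.sum_singleton,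
    coeff_monomial, if_pos rfl]

@[simp]
lemma l1Norm_C (a : R) : l1Norm (C a : MvPolynomial σ R) = |a| := l1Norm_monomial 0 a

@[simp]
lemma l1Norm_one : l1Norm (1 : MvPolynomial σ R) = 1 := by
  rw [← C_1, l1Norm_C, abs_one]

@[simp]
lemma l1Norm_X (i : σ) : l1Norm (X i : MvPolynomial σ R) = 1 := by
  rw [X, l1Norm_monomial, abs_one]

lemma l1Norm_add_le (p q : MvPolynomial σ R) : l1Norm (p + q) ≤ l1Norm p + l1Norm q := by
  classical
  rw [l1Norm_eq_sum_of_support_subset support_add,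
    l1Norm_eq_sum_of_support_subset (Finset.subset_union_left (s₂ := q.support)),
    l1Norm_eq_sum_of_support_subset (Finset.subset_union_right (s₁ := p.support)),
    ← Finset.sum_add_distrib]
  exact Finset.sum_le_sum fun c _ => by rw [coeff_add]; exact abs_add_le _ _

lemma l1Norm_sum_le {ι : Type*} (s : Finset ι) (f : ι → MvPolynomial σ R) :
    l1Norm (∑ i ∈ s, f i) ≤ ∑ i ∈ s, l1Norm (f i) :=
  Finset.le_sum_of_subadditive l1Norm l1Norm_zero.le l1Norm_add_le s f

lemma l1Norm_mul_le (p q : MvPolynomial σ R) : l1Norm (p * q) ≤ l1Norm p * l1Norm q := by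
  have monomial_mul_le (s : σ →₀ ℕ) (a : R) :
      l1Norm (monomial s a * q) ≤ |a| * l1Norm q := by
    conv_lhs => rw [q.as_sum, Finset.mul_sum]
    refine (l1Norm_sum_le _ _).trans ?_
    rw [l1Norm, Finset.mul_sum]
    exact Finset.sum_le_sum fun c _ => by rw [monomial_mul, l1Norm_monomial, abs_mul]
  conv_lhs => rw [p.as_sum, Finset.sum_mul]
  refine (l1Norm_sum_le _ _).trans ?_
  rw [l1Norm, Finset.sum_mul]
  exact Finset.sum_le_sum fun c _ => monomial_mul_le _ _

lemma l1Norm_prod_le {ι : Type*} (s : Finset ι) (f : ι → MvPolynomial σ R) :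
    l1Norm (∏ i ∈ s, f i) ≤ ∏ i ∈ s, l1Norm (f i) := by
  classical
  induction s using Finset.induction with
  | empty => simp
  | insert i s hi ih =>
    rw [Finset.prod_insert hi, Finset.prod_insert hi]
    exact (l1Norm_mul_le _ _).trans (mul_le_mul_of_nonneg_left ih (l1Norm_nonneg _))

lemma l1Norm_pow_le (p : MvPolynomial σ R) (n : ℕ) : l1Norm (p ^ n) ≤ l1Norm p ^ n := by
  simpa using l1Norm_prod_le (Finset.range n) fun _ => p

lemma l1Norm_bind₁_le (f : σ → MvPolynomial τ R) (p : MvPolynomial σ R) {M : R}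
    (hM : 1 ≤ M) (hf : ∀ v ∈ p.vars, l1Norm (f v) ≤ M) :
    l1Norm (bind₁ f p) ≤ l1Norm p * M ^ p.totalDegree := by
  conv_lhs => rw [p.as_sum, map_sum]
  refine (l1Norm_sum_le _ _).trans ?_
  rw [l1Norm, Finset.sum_mul]
  refine Finset.sum_le_sum fun c hc => ?_
  have hprod : l1Norm (∏ v ∈ c.support, f v ^ c v) ≤ M ^ p.totalDegree := calc
    _ ≤ ∏ v ∈ c.support, l1Norm (f v) ^ c v :=
      (l1Norm_prod_le _ _).trans <| Finset.prod_le_prod (fun _ _ => l1Norm_nonneg _)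
        fun _ _ => l1Norm_pow_le _ _
    _ ≤ ∏ v ∈ c.support, M ^ c v :=
      Finset.prod_le_prod (fun _ _ => pow_nonneg (l1Norm_nonneg _) _) fun v hv =>
        pow_le_pow_left₀ (l1Norm_nonneg _)
          (hf v ((mem_vars_iff_mem_support v).mpr ⟨c, hc, hv⟩)) _
    _ ≤ M ^ p.totalDegree := by
      rw [Finset.prod_pow_eq_pow_sum]; exact pow_le_pow_right₀ hM (le_totalDegree hc)
  rw [bind₁_monomial]
  refine (l1Norm_mul_le _ _).trans ?_
  rw [l1Norm_C]
  exact mul_le_mul_of_nonneg_left hprod (abs_nonneg _)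

end l1Norm

lemma totalDegree_bind₁_le {σ τ R : Type*} [CommSemiring R] (f : σ → MvPolynomial τ R)
    (p : MvPolynomial σ R) {d : ℕ} (hf : ∀ v ∈ p.vars, (f v).totalDegree ≤ d) :
    (bind₁ f p).totalDegree ≤ d * p.totalDegree := by
  conv_lhs => rw [p.as_sum, map_sum]
  refine totalDegree_finsetSum_le fun c hc => ?_
  rw [bind₁_monomial]
  refine (totalDegree_mul _ _).trans ?_
  rw [totalDegree_C, zero_add]
  refine (totalDegree_finsetProd _ _).trans ?_
  calc ∑ v ∈ c.support, (f v ^ c v).totalDegree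
      ≤ ∑ v ∈ c.support, c v * d := Finset.sum_le_sum fun v hv =>
        (totalDegree_pow _ _).trans <|
          Nat.mul_le_mul_left _ (hf v ((mem_vars_iff_mem_support v).mpr ⟨c, hc, hv⟩))
    _ ≤ d * p.totalDegree := by
      rw [← Finset.sum_mul, mul_comm]; exact Nat.mul_le_mul_left _ (le_totalDegree hc)

end MvPolynomial

section PolyBounded

variable {R : Type*} [CommRing R] [LinearOrder R]

def PolyBounded (a : ℕ → R) : Prop := ∃ C : R, ∃ e : ℕ, 0 ≤ C ∧ ∀ n, a n ≤ C * (n + 1) ^ e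

variable [IsStrictOrderedRing R]

lemma polyBounded_const (c : R) : PolyBounded fun _ => c :=
  ⟨|c|, 0, abs_nonneg c, fun _ => by simpa using le_abs_self c⟩

lemma PolyBounded.add {a b : ℕ → R} (ha : PolyBounded a) (hb : PolyBounded b) :
    PolyBounded (a + b) := by
  obtain ⟨C, e, hC, hCe⟩ := ha
  obtain ⟨D, f, hD, hDf⟩ := hb
  refine ⟨C + D, max e f, add_nonneg hC hD, fun n => ?_⟩
  have hn : (1 : R) ≤ (n : R) + 1 := le_add_of_nonneg_left n.cast_nonneg
  calc a n + b n ≤ C * ((n : R) + 1) ^ e + D * ((n : R) + 1) ^ f := add_le_add (hCe n) (hDf n)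
    _ ≤ C * ((n : R) + 1) ^ max e f + D * ((n : R) + 1) ^ max e f := by
        gcongr <;> first | exact hn | omega
    _ = (C + D) * ((n : R) + 1) ^ max e f := by ring

lemma PolyBounded.mul {a b : ℕ → R} (ha : PolyBounded a) (hb : PolyBounded b)
    (ha₀ : ∀ n, 0 ≤ a n) (hb₀ : ∀ n, 0 ≤ b n) : PolyBounded (a * b) := by
  obtain ⟨C, e, hC, hCe⟩ := ha
  obtain ⟨D, f, hD, hDf⟩ := hb
  refine ⟨C * D, e + f, mul_nonneg hC hD, fun n => ?_⟩
  calc a n * b n ≤ (C * ((n : R) + 1) ^ e) * (D * ((n : R) + 1) ^ f) :=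
        mul_le_mul (hCe n) (hDf n) (hb₀ n) ((ha₀ n).trans (hCe n))
    _ = C * D * ((n : R) + 1) ^ (e + f) := by ring

lemma PolyBounded.pow {a : ℕ → R} (ha : PolyBounded a) (ha₀ : ∀ n, 0 ≤ a n) (d : ℕ) :
    PolyBounded (a ^ d) := by
  induction d with
  | zero => rw [pow_zero]; exact polyBounded_const 1
  | succ d ih => simpa [pow_succ] using ih.mul ha (fun n => pow_nonneg (ha₀ n) d) ha₀

lemma PolyBounded.sum {ι : Type*} {s : Finset ι} {a : ι → ℕ → R}
    (ha : ∀ i ∈ s, PolyBounded (a i)) : PolyBounded fun n => ∑ i ∈ s, a i n := by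
  classical
  induction s using Finset.induction with
  | empty => simpa using polyBounded_const (0 : R)
  | insert i s hi ih =>
    simp only [Finset.sum_insert hi]
    exact (ha i (Finset.mem_insert_self i s)).add
      (ih fun j hj => ha j (Finset.mem_insert_of_mem hj))

lemma PolyBounded.of_le_add {a d : ℕ → R} (hd : PolyBounded d)
    (ha : ∀ n, a (n + 1) ≤ a n + d n) : PolyBounded a := by
  obtain ⟨C, e, hC, hCe⟩ := hd
  refine ⟨|a 0| + C, e + 1, add_nonneg (abs_nonneg _) hC, fun n => ?_⟩
  induction n with
  | zero => simpa using le_add_of_le_of_nonneg (le_abs_self (a 0)) hC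
  | succ n ih =>
    have hpow : ((n : R) + 1) ^ (e + 1) + ((n : R) + 1) ^ e ≤ ((n : R) + 1 + 1) ^ (e + 1) := by
      have hmono : ((n : R) + 1) ^ e ≤ ((n : R) + 1 + 1) ^ e :=
        pow_le_pow_left₀ (by positivity) (by linarith) e
      calc ((n : R) + 1) ^ (e + 1) + ((n : R) + 1) ^ e
          = ((n : R) + 1 + 1) * ((n : R) + 1) ^ e := by ring
        _ ≤ ((n : R) + 1 + 1) * ((n : R) + 1 + 1) ^ e :=
            mul_le_mul_of_nonneg_left hmono (by positivity)
        _ = _ := by ring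
    have hC' : C * ((n : R) + 1) ^ e ≤ (|a 0| + C) * ((n : R) + 1) ^ e :=
      mul_le_mul_of_nonneg_right (le_add_of_nonneg_left (abs_nonneg _)) (by positivity)
    calc a (n + 1) ≤ (|a 0| + C) * ((n : R) + 1) ^ (e + 1) + C * ((n : R) + 1) ^ e :=
          (ha n).trans (add_le_add ih (hCe n))
      _ ≤ (|a 0| + C) * (((n : R) + 1) ^ (e + 1) + ((n : R) + 1) ^ e) := by
          rw [mul_add]; gcongr
      _ ≤ (|a 0| + C) * ((((n + 1 : ℕ) : R)) + 1) ^ (e + 1) := by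
          push_cast
          exact mul_le_mul_of_nonneg_left hpow (add_nonneg (abs_nonneg _) hC)

end PolyBounded

section Malcev

variable {m : ℕ} (P : Fin m → MvPolynomial (Fin m ⊕ Fin m) ℚ)

def malStarPoly (q : Fin m → MvPolynomial (Fin m) ℚ) : Fin m → MvPolynomial (Fin m) ℚ :=
  fun i => X i + q i + bind₁ (Sum.elim X q) (P i)

/-- The coordinates of `x^{*(n+1)}` (note the shift). -/
def malPowPoly (n : ℕ) : Fin m → MvPolynomial (Fin m) ℚ := (malStarPoly P)^[n] X

lemma aeval_malStarPoly (x : Fin m → ℝ) (q : Fin m → MvPolynomial (Fin m) ℚ) (i : Fin m) :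
    aeval x (malStarPoly P q i) = malStar P x (fun j => aeval x (q j)) i := by
  have hvars : (fun v => aeval x (Sum.elim X q v)) = Sum.elim x fun j => aeval x (q j) := by
    ext (j | j) <;> simp
  simp only [malStarPoly, malStar, map_add, aeval_X, aeval_bind₁, hvars]

lemma aeval_malPowPoly (x : Fin m → ℝ) (n : ℕ) (i : Fin m) :
    aeval x (malPowPoly P n i) = malPow P x (n + 1) i := by
  induction n generalizing i with
  | zero => simp [malPowPoly, malPow]
  | succ n ih =>
    rw [malPowPoly, Function.iterate_succ_apply', aeval_malStarPoly, ← malPowPoly]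
    simp only [ih]
    rfl

variable {P}

lemma totalDegree_malStarPoly_le {k : ℕ} (hk : 0 < k)
    (hPdeg : ∀ i, (P i).totalDegree ≤ k - 1)
    (hPvars : ∀ i : Fin m, ∀ v ∈ (P i).vars, Sum.elim Fin.val Fin.val v < (i : ℕ))
    {q : Fin m → MvPolynomial (Fin m) ℚ} (hq : ∀ j, (q j).totalDegree ≤ k ^ (j : ℕ))
    (i : Fin m) : (malStarPoly P q i).totalDegree ≤ k ^ (i : ℕ) := by
  -- `k ^ i / k` is `0` for `i = 0`, which is harmless since then `P i` has no variables.
  have hsubst : ∀ v ∈ (P i).vars, (Sum.elim X q v).totalDegree ≤ k ^ (i : ℕ) / k := by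
    intro v hv
    have hv_deg : (Sum.elim X q v).totalDegree ≤ k ^ Sum.elim Fin.val Fin.val v := by
      rcases v with j | j
      · rw [Sum.elim_inl, totalDegree_X]; exact Nat.one_le_pow _ _ hk
      · exact hq j
    rw [Nat.le_div_iff_mul_le hk]
    calc (Sum.elim X q v).totalDegree * k ≤ k ^ (Sum.elim Fin.val Fin.val v + 1) := by
          rw [pow_succ]; exact Nat.mul_le_mul_right k hv_deg
      _ ≤ k ^ (i : ℕ) := Nat.pow_le_pow_right hk (hPvars i v hv)
  calc (malStarPoly P q i).totalDegree
      ≤ max (max 1 (q i).totalDegree) (bind₁ (Sum.elim X q) (P i)).totalDegree := by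
        unfold malStarPoly
        exact (totalDegree_add _ _).trans <| max_le_max
          ((totalDegree_add _ _).trans (max_le_max (totalDegree_X i).le le_rfl)) le_rfl
    _ ≤ k ^ (i : ℕ) := by
      refine max_le (max_le (Nat.one_le_pow _ _ hk) (hq i)) ?_
      calc (bind₁ (Sum.elim X q) (P i)).totalDegree ≤ k ^ (i : ℕ) / k * (P i).totalDegree :=
            totalDegree_bind₁_le _ _ hsubst
        _ ≤ k ^ (i : ℕ) / k * k := Nat.mul_le_mul_left _ ((hPdeg i).trans (Nat.sub_le k 1))
        _ ≤ k ^ (i : ℕ) := Nat.div_mul_le_self _ _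

lemma totalDegree_malPowPoly_le {k : ℕ} (hk : 0 < k)
    (hPdeg : ∀ i, (P i).totalDegree ≤ k - 1)
    (hPvars : ∀ i : Fin m, ∀ v ∈ (P i).vars, Sum.elim Fin.val Fin.val v < (i : ℕ))
    (n : ℕ) (i : Fin m) : (malPowPoly P n i).totalDegree ≤ k ^ (i : ℕ) := by
  induction n generalizing i with
  | zero => rw [malPowPoly, Function.iterate_zero_apply, totalDegree_X]; exact Nat.one_le_pow _ _ hk
  | succ n ih =>
    rw [malPowPoly, Function.iterate_succ_apply']
    exact totalDegree_malStarPoly_le hk hPdeg hPvars ih i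

lemma l1Norm_malStarPoly_le
    (hPvars : ∀ i : Fin m, ∀ v ∈ (P i).vars, Sum.elim Fin.val Fin.val v < (i : ℕ))
    {q : Fin m → MvPolynomial (Fin m) ℚ} {i : Fin m} {M : ℚ} (hM : 1 ≤ M)
    (hq : ∀ j < i, l1Norm (q j) ≤ M) :
    l1Norm (malStarPoly P q i) ≤ l1Norm (q i) + (1 + l1Norm (P i) * M ^ (P i).totalDegree) := by
  have hsubst : ∀ v ∈ (P i).vars, l1Norm (Sum.elim X q v) ≤ M := by
    rintro (j | j) hv
    · rw [Sum.elim_inl, l1Norm_X]; exact hM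
    · exact hq j (hPvars i _ hv)
  have hbind := l1Norm_bind₁_le (Sum.elim X q) (P i) hM hsubst
  have hsum := l1Norm_add_le (X i + q i) (bind₁ (Sum.elim X q) (P i))
  have hsum' := l1Norm_add_le (X i) (q i)
  rw [l1Norm_X] at hsum'
  unfold malStarPoly
  linarith

lemma polyBounded_l1Norm_malPowPoly
    (hPvars : ∀ i : Fin m, ∀ v ∈ (P i).vars, Sum.elim Fin.val Fin.val v < (i : ℕ))
    (i : Fin m) : PolyBounded fun n => l1Norm (malPowPoly P n i) := by
  induction i using WellFoundedLT.induction with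
  | ind i ih =>
    set M : ℕ → ℚ := fun n => 1 + ∑ j ∈ Finset.Iio i, l1Norm (malPowPoly P n j)
    have hM₁ (n : ℕ) : 1 ≤ M n :=
      le_add_of_nonneg_right (Finset.sum_nonneg fun _ _ => l1Norm_nonneg _)
    have hM : PolyBounded M :=
      (polyBounded_const 1).add (PolyBounded.sum fun j hj => ih j (Finset.mem_Iio.mp hj))
    have hincr : PolyBounded fun n => 1 + l1Norm (P i) * M n ^ (P i).totalDegree :=
      (polyBounded_const 1).add <| (polyBounded_const _).mul
        (hM.pow (fun n => zero_le_one.trans (hM₁ n)) _) (fun _ => l1Norm_nonneg _)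
        fun n => pow_nonneg (zero_le_one.trans (hM₁ n)) _
    refine hincr.of_le_add fun n => ?_
    rw [malPowPoly, Function.iterate_succ_apply']
    refine l1Norm_malStarPoly_le hPvars (hM₁ n) fun j hj => ?_
    exact le_add_of_nonneg_of_le zero_le_one
      (Finset.single_le_sum (fun _ _ => l1Norm_nonneg _) (Finset.mem_Iio.mpr hj))

end Malcev

theorem malcev_powers_polynomial_general (k m : ℕ) (hk : 2 ≤ k)
    (P : Fin m → MvPolynomial (Fin m ⊕ Fin m) ℚ)
    (hPdeg : ∀ i, (P i).totalDegree ≤ k - 1)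
    (hPvars : ∀ i : Fin m, ∀ v ∈ (P i).vars, Sum.elim Fin.val Fin.val v < (i : ℕ)) :
    ∃ (R : Polynomial ℝ) (Q : Fin m → ℕ → MvPolynomial (Fin m) ℚ),
      (∀ j, 0 ≤ R.coeff j) ∧
      (∀ (x : Fin m → ℝ) (n : ℕ), 1 ≤ n → ∀ i : Fin m,
        malPow P x n i = MvPolynomial.aeval x (Q i n)) ∧
      (∀ (i : Fin m) (n : ℕ), 1 ≤ n → (Q i n).totalDegree < k ^ m) ∧
      (∀ (i : Fin m) (n : ℕ), 1 ≤ n →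
        ((∑ c ∈ (Q i n).support, |(Q i n).coeff c| : ℚ) : ℝ) ≤ R.eval (n : ℝ)) := by
  obtain ⟨C, e, hC, hbound⟩ :=
    PolyBounded.sum fun i (_ : i ∈ Finset.univ) => polyBounded_l1Norm_malPowPoly hPvars i
  refine ⟨Polynomial.C (C : ℝ) * Polynomial.X ^ e, fun i n => malPowPoly P (n - 1) i,
    fun j => ?_, fun x n hn i => ?_, fun i n _ => ?_, fun i n hn => ?_⟩
  · rw [Polynomial.coeff_C_mul_X_pow]
    split_ifs <;> positivity
  · rw [aeval_malPowPoly, Nat.sub_add_cancel hn]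
  · exact (totalDegree_malPowPoly_le (by omega) hPdeg hPvars _ i).trans_lt
      (Nat.pow_lt_pow_right hk i.isLt)
  · have hi : l1Norm (malPowPoly P (n - 1) i) ≤ C * (n : ℚ) ^ e := by
      simpa [Nat.cast_sub hn] using
        (Finset.single_le_sum (fun j _ => l1Norm_nonneg _) (Finset.mem_univ i)).trans
          (hbound (n - 1))
    have hR : ((l1Norm (malPowPoly P (n - 1) i) : ℚ) : ℝ) ≤ (C : ℝ) * (n : ℝ) ^ e := by
      exact_mod_cast hi
    rwa [Polynomial.eval_mul, Polynomial.eval_C, Polynomial.eval_pow, Polynomial.eval_X]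

/-- Lemma 4.3 of the paper (1-step data): in Mal'cev coordinates with multiplication
given by polynomials `P i` of degree at most `k - 1`, the coordinates of `x^{*n}` are
polynomials `Q i n` over `ℚ` of degree `< k^m`, whose coefficients have absolute values
summing to at most `R(n)` for some polynomial `R` with nonnegative coefficients. -/
theorem malcev_powers_polynomial (k m : ℕ) (hk : 2 ≤ k) (hm : 1 ≤ m)
    (P : Fin m → MvPolynomial (Fin m ⊕ Fin m) ℚ)
    (hP0 : ∀ i : Fin m, (i : ℕ) = 0 → P i = 0)
    (hPdeg : ∀ i, (P i).totalDegree ≤ k - 1)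
    (hPvars : ∀ i : Fin m, ∀ v ∈ (P i).vars, Sum.elim Fin.val Fin.val v < (i : ℕ)) :
    ∃ (R : Polynomial ℝ) (Q : Fin m → ℕ → MvPolynomial (Fin m) ℚ),
      (∀ j, 0 ≤ R.coeff j) ∧
      (∀ (x : Fin m → ℝ) (n : ℕ), 1 ≤ n → ∀ i : Fin m,
        malPow P x n i = MvPolynomial.aeval x (Q i n)) ∧
      (∀ (i : Fin m) (n : ℕ), 1 ≤ n → (Q i n).totalDegree < k ^ m) ∧
      (∀ (i : Fin m) (n : ℕ), 1 ≤ n →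
        ((∑ c ∈ (Q i n).support, |(Q i n).coeff c| : ℚ) : ℝ) ≤ R.eval (n : ℝ)) :=
  malcev_powers_polynomial_general k m hk P hPdeg hPvars
end
end

section
/- Fix integers k ≥ 1 and m ≥ 1 and polynomials P_1, …, P_{m−1}, where P_i ∈ ℚ[s_1,…,s_i,t_1,…,t_i] has total degree at most k−1, defining the operation * on ℝ^m as in the context. Then: (i) for every x ∈ ℝ^m there is a unique z(x) = (z_1(x),…,z_m(x)) ∈ ℤ^m such that x * z(x) ∈ [0,1)^m; (ii) there exist constants C > 0 and N_0 > 0 such that for every x ∈ ℝ^m with max_{1≤i≤m}|x_i| > N_0 one has |z_i(x)| ≤ C (max_{1≤i≤m}|x_i|)^{k^{m−1}} for every 1 ≤ i ≤ m. -/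
open Filter Topology

noncomputable section

/-!
The product is triangular: `(x * z)_i = x_i + z_i + P_i(x, z_{<i})`, so `x * z ∈ [0,1)^m` forces
`z_i = -⌊x_i + P_i(x, z_{<i})⌋`, which determines `z` one coordinate at a time. For the bound,
if `|z_j| ≲ R^{k^j}` for `j < i`, where `R = max_j |x_j|`, then every argument of `P_i` is
`≲ R^{k^{i-1}}`, so `|P_i(x, z)| ≲ R^{k^{i-1}(k-1)} ≤ R^{k^i}`, and `|z_i| ≤ |x_i| + |P_i| + 1`.
-/

open MvPolynomial Function Set

section Triangular

variable {m : ℕ} {α : Type*} {F : (Fin m → α) → Fin m → α}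

lemma iterate_apply_eq_of_triangular (hF : ∀ z w i, (∀ j < i, z j = w j) → F z i = F w i)
    (n : ℕ) (z w : Fin m → α) (i : Fin m) (hi : (i : ℕ) < n) : F^[n] z i = F^[n] w i := by
  induction n generalizing i with
  | zero => exact absurd hi (Nat.not_lt_zero _)
  | succ n ih =>
    rw [iterate_succ_apply', iterate_succ_apply']
    exact hF _ _ i fun j hj => ih j (by omega)

lemma existsUnique_isFixedPt_of_triangular [Nonempty α]
    (hF : ∀ z w i, (∀ j < i, z j = w j) → F z i = F w i) : ∃! z, IsFixedPt F z := by
  have hconst : ∀ z w, F^[m] z = F^[m] w := fun z w =>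
    funext fun i => iterate_apply_eq_of_triangular hF m z w i i.isLt
  obtain ⟨z₀⟩ := ‹Nonempty α›
  refine ⟨F^[m] fun _ => z₀, ?_, fun w hw => ?_⟩
  · change F _ = _
    rw [← iterate_succ_apply' F m, iterate_succ_apply, hconst]
  · rw [← iterate_fixed hw m, hconst]

end Triangular

section Floor

variable {R : Type*} [CommRing R] [LinearOrder R] [IsStrictOrderedRing R] [FloorRing R]

lemma add_intCast_mem_Ico_iff (r : R) (z : ℤ) : r + z ∈ Ico (0 : R) 1 ↔ -⌊r⌋ = z := by
  rw [neg_eq_iff_eq_neg, Int.floor_eq_iff, mem_Ico]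
  push_cast
  constructor <;> rintro ⟨h₀, h₁⟩ <;> constructor <;> linarith

lemma abs_floor_le_abs_add_one (r : R) : |(⌊r⌋ : R)| ≤ |r| + 1 := by
  rw [abs_le]
  constructor <;> linarith [Int.floor_le r, Int.lt_floor_add_one r, le_abs_self r, neg_abs_le r]

end Floor

lemma aeval_congr_of_vars {σ R S : Type*} [CommSemiring R] [CommSemiring S] [Algebra R S]
    (p : MvPolynomial σ R) {f g : σ → S} (h : ∀ v ∈ p.vars, f v = g v) : aeval f p = aeval g p := by
  simp only [aeval_eq_eval₂Hom]
  exact eval₂Hom_congr' rfl (fun v hv _ => h v hv) rfl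

def coeffAbsSum {σ R : Type*} [CommSemiring R] [Algebra R ℝ] (p : MvPolynomial σ R) : ℝ :=
  ∑ d ∈ p.support, |algebraMap R ℝ (p.coeff d)|

lemma coeffAbsSum_nonneg {σ R : Type*} [CommSemiring R] [Algebra R ℝ] (p : MvPolynomial σ R) :
    0 ≤ coeffAbsSum p :=
  Finset.sum_nonneg fun _ _ => abs_nonneg _

lemma abs_aeval_le {σ R : Type*} [CommSemiring R] [Algebra R ℝ] (p : MvPolynomial σ R)
    {f : σ → ℝ} {B : ℝ} (hB : 1 ≤ B) (hf : ∀ v ∈ p.vars, |f v| ≤ B) :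
    |aeval f p| ≤ coeffAbsSum p * B ^ p.totalDegree := by
  rw [aeval_def, eval₂_eq, coeffAbsSum, Finset.sum_mul]
  refine (Finset.abs_sum_le_sum_abs _ _).trans (Finset.sum_le_sum fun d hd => ?_)
  rw [abs_mul, Finset.abs_prod]
  gcongr
  calc ∏ v ∈ d.support, |f v ^ d v| ≤ ∏ v ∈ d.support, B ^ d v := by
        refine Finset.prod_le_prod (fun _ _ => abs_nonneg _) fun v hv => ?_
        rw [abs_pow]
        exact pow_le_pow_left₀ (abs_nonneg _)
          (hf v ((mem_vars_iff_mem_support v).mpr ⟨d, hd, hv⟩)) _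
    _ = B ^ d.sum fun _ e => e := by rw [Finsupp.sum, Finset.prod_pow_eq_pow_sum]
    _ ≤ B ^ p.totalDegree := pow_le_pow_right₀ hB (le_totalDegree hd)

section Malcev

variable {m : ℕ} {P : Fin m → MvPolynomial (Fin m ⊕ Fin m) ℚ}

variable (P) in
def malcevRound (x : Fin m → ℝ) (z : Fin m → ℤ) (i : Fin m) : ℤ :=
  -⌊x i + aeval (Sum.elim x fun j => (z j : ℝ)) (P i)⌋

lemma forall_malStar_mem_Ico_iff (x : Fin m → ℝ) (z : Fin m → ℤ) :
    (∀ i, malStar P x (fun j => (z j : ℝ)) i ∈ Ico (0 : ℝ) 1) ↔ IsFixedPt (malcevRound P x) z := by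
  rw [IsFixedPt, funext_iff]
  refine forall_congr' fun i => ?_
  rw [malcevRound, ← add_intCast_mem_Ico_iff, malStar, add_right_comm]

lemma malcevRound_triangular
    (hPvars : ∀ i : Fin m, ∀ v ∈ (P i).vars, Sum.elim Fin.val Fin.val v < (i : ℕ))
    (x : Fin m → ℝ) (z w : Fin m → ℤ) (i : Fin m) (h : ∀ j < i, z j = w j) :
    malcevRound P x z i = malcevRound P x w i := by
  rw [malcevRound, malcevRound, aeval_congr_of_vars (P i) fun v hv => ?_]
  cases v with
  | inl a => rfl
  | inr b => simp only [Sum.elim_inr, h b (hPvars i _ hv)]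

theorem existsUnique_malStar_mem_Ico
    (hPvars : ∀ i : Fin m, ∀ v ∈ (P i).vars, Sum.elim Fin.val Fin.val v < (i : ℕ))
    (x : Fin m → ℝ) :
    ∃! z : Fin m → ℤ, ∀ i, malStar P x (fun j => (z j : ℝ)) i ∈ Ico (0 : ℝ) 1 := by
  simp_rw [forall_malStar_mem_Ico_iff]
  exact existsUnique_isFixedPt_of_triangular (malcevRound_triangular hPvars x)

lemma abs_intCast_le_of_isFixedPt {x : Fin m → ℝ} {z : Fin m → ℤ}
    (hz : IsFixedPt (malcevRound P x) z) (i : Fin m) :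
    |(z i : ℝ)| ≤ |x i| + |aeval (Sum.elim x fun j => (z j : ℝ)) (P i)| + 1 := by
  rw [← congrFun hz.eq i, malcevRound, Int.cast_neg, abs_neg]
  exact (abs_floor_le_abs_add_one _).trans (add_le_add_left (abs_add_le _ _) 1)

section Bound

variable {k : ℕ} (hk : 1 ≤ k) (hP0 : ∀ i : Fin m, (i : ℕ) = 0 → P i = 0)
  (hPdeg : ∀ i, (P i).totalDegree ≤ k - 1)
  (hPvars : ∀ i : Fin m, ∀ v ∈ (P i).vars, Sum.elim Fin.val Fin.val v < (i : ℕ))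
include hk hP0 hPdeg hPvars

lemma abs_aeval_le_of_abs_le {x : Fin m → ℝ} {z : Fin m → ℤ} {C R : ℝ} (hC : 0 ≤ C)
    (hR : 1 ≤ R) (hx : ∀ j, |x j| ≤ R) (i : Fin m)
    (hz : ∀ j < i, |(z j : ℝ)| ≤ C * R ^ k ^ (j : ℕ)) :
    |aeval (Sum.elim x fun j => (z j : ℝ)) (P i)| ≤
      coeffAbsSum (P i) * (C + 1) ^ (k - 1) * R ^ k ^ (i : ℕ) := by
  rcases Nat.eq_zero_or_pos i with hi | hi
  · simp only [hP0 i hi, map_zero, abs_zero]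
    exact mul_nonneg (mul_nonneg (coeffAbsSum_nonneg _) (by positivity))
      (by positivity)
  set e := k ^ ((i : ℕ) - 1)
  have hRe : 1 ≤ R ^ e := one_le_pow₀ hR
  have hB : ∀ v ∈ (P i).vars, |Sum.elim x (fun j => (z j : ℝ)) v| ≤ (C + 1) * R ^ e := by
    intro v hv
    cases v with
    | inl a => calc
        |x a| ≤ 1 * R ^ 1 := by simpa using hx a
        _ ≤ (C + 1) * R ^ e := by
          gcongr
          exacts [by linarith, Nat.one_le_pow _ _ hk]
    | inr b =>
      have hb : b < i := hPvars i _ hv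
      calc |(z b : ℝ)| ≤ C * R ^ k ^ (b : ℕ) := hz b hb
        _ ≤ (C + 1) * R ^ e := by
          gcongr
          exacts [by linarith, Nat.pow_le_pow_right hk (by omega)]
  have he : e * (k - 1) ≤ k ^ (i : ℕ) := calc
    e * (k - 1) ≤ e * k := Nat.mul_le_mul_left _ (Nat.sub_le k 1)
    _ = k ^ (i : ℕ) := by rw [← pow_succ, Nat.sub_add_cancel hi]
  calc _ ≤ coeffAbsSum (P i) * ((C + 1) * R ^ e) ^ (P i).totalDegree :=
        abs_aeval_le _ (one_le_mul_of_one_le_of_one_le (by linarith) hRe) hB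
    _ ≤ coeffAbsSum (P i) * ((C + 1) * R ^ e) ^ (k - 1) := by
        gcongr
        exacts [coeffAbsSum_nonneg _,
          one_le_mul_of_one_le_of_one_le (by linarith) hRe, hPdeg i]
    _ = coeffAbsSum (P i) * (C + 1) ^ (k - 1) * R ^ (e * (k - 1)) := by
        rw [mul_pow, pow_mul, mul_assoc]
    _ ≤ coeffAbsSum (P i) * (C + 1) ^ (k - 1) * R ^ k ^ (i : ℕ) := by
        gcongr
        exact mul_nonneg (coeffAbsSum_nonneg _) (by positivity)

lemma exists_abs_le_mul_norm_pow (n : ℕ) :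
    ∃ C, 0 ≤ C ∧ ∀ x : Fin m → ℝ, 1 ≤ ‖x‖ → ∀ z, IsFixedPt (malcevRound P x) z →
      ∀ i : Fin m, (i : ℕ) < n → |(z i : ℝ)| ≤ C * ‖x‖ ^ k ^ (i : ℕ) := by
  induction n with
  | zero => exact ⟨0, le_rfl, fun _ _ _ _ _ hi => absurd hi (Nat.not_lt_zero _)⟩
  | succ n ih =>
    obtain ⟨C, hC, hbound⟩ := ih
    set A := ∑ i, coeffAbsSum (P i)
    have hA : 0 ≤ A := Finset.sum_nonneg fun i _ => coeffAbsSum_nonneg _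
    refine ⟨C + A * (C + 1) ^ (k - 1) + 2, by positivity, fun x hx z hz i hi => ?_⟩
    have hxR : ∀ j, |x j| ≤ ‖x‖ := fun j => (Real.norm_eq_abs _).symm.trans_le (norm_le_pi_norm x j)
    have hR : 1 ≤ ‖x‖ ^ k ^ (i : ℕ) := one_le_pow₀ hx
    have hRk : ‖x‖ ≤ ‖x‖ ^ k ^ (i : ℕ) := le_self_pow₀ hx (Nat.pow_pos hk).ne'
    rcases Nat.lt_succ_iff_lt_or_eq.mp hi with hi | hi
    · calc |(z i : ℝ)| ≤ C * ‖x‖ ^ k ^ (i : ℕ) := hbound x hx z hz i hi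
        _ ≤ _ := by gcongr; linarith [mul_nonneg hA (pow_nonneg (by linarith : 0 ≤ C + 1) (k - 1))]
    have hq := abs_aeval_le_of_abs_le hk hP0 hPdeg hPvars hC hx hxR i
      fun j hj => hbound x hx z hz j (hi ▸ hj)
    have hAi : coeffAbsSum (P i) ≤ A :=
      Finset.single_le_sum (f := fun j => coeffAbsSum (P j)) (fun j _ => coeffAbsSum_nonneg _)
        (Finset.mem_univ i)
    calc |(z i : ℝ)| ≤ |x i| + |aeval (Sum.elim x fun j => (z j : ℝ)) (P i)| + 1 :=
          abs_intCast_le_of_isFixedPt hz i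
      _ ≤ ‖x‖ ^ k ^ (i : ℕ) + A * (C + 1) ^ (k - 1) * ‖x‖ ^ k ^ (i : ℕ) + ‖x‖ ^ k ^ (i : ℕ) := by
          have : coeffAbsSum (P i) * (C + 1) ^ (k - 1) * ‖x‖ ^ k ^ (i : ℕ) ≤
              A * (C + 1) ^ (k - 1) * ‖x‖ ^ k ^ (i : ℕ) := by gcongr
          linarith [hxR i]
      _ ≤ (C + A * (C + 1) ^ (k - 1) + 2) * ‖x‖ ^ k ^ (i : ℕ) := by
          nlinarith [mul_nonneg hC (zero_le_one.trans hR)]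

end Bound

end Malcev

theorem malcev_fundamental_domain_general (k m : ℕ) (hk : 1 ≤ k)
    (P : Fin m → MvPolynomial (Fin m ⊕ Fin m) ℚ)
    (hP0 : ∀ i : Fin m, (i : ℕ) = 0 → P i = 0)
    (hPdeg : ∀ i, (P i).totalDegree ≤ k - 1)
    (hPvars : ∀ i : Fin m, ∀ v ∈ (P i).vars, Sum.elim Fin.val Fin.val v < (i : ℕ)) :
    (∀ x : Fin m → ℝ, ∃! z : Fin m → ℤ,
      ∀ i, malStar P x (fun j => (z j : ℝ)) i ∈ Set.Ico (0 : ℝ) 1) ∧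
    ∃ C : ℝ, 0 < C ∧ ∃ N₀ : ℝ, 0 < N₀ ∧
      ∀ x : Fin m → ℝ, N₀ < ‖x‖ →
        ∀ z : Fin m → ℤ, (∀ i, malStar P x (fun j => (z j : ℝ)) i ∈ Set.Ico (0 : ℝ) 1) →
          ∀ i, |(z i : ℝ)| ≤ C * ‖x‖ ^ (k ^ (m - 1)) := by
  refine ⟨existsUnique_malStar_mem_Ico hPvars, ?_⟩
  obtain ⟨C, hC, hbound⟩ := exists_abs_le_mul_norm_pow hk hP0 hPdeg hPvars m
  refine ⟨C + 1, by positivity, 1, one_pos, fun x hx z hz i => ?_⟩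
  rw [forall_malStar_mem_Ico_iff] at hz
  calc |(z i : ℝ)| ≤ C * ‖x‖ ^ k ^ (i : ℕ) := hbound x hx.le z hz i i.isLt
    _ ≤ (C + 1) * ‖x‖ ^ k ^ (m - 1) := by
      gcongr
      exacts [by linarith, hx.le, by omega]

/-- Proposition 4.5 of the paper: (i) for every `x ∈ ℝ^m` there is a unique `z(x) ∈ ℤ^m`
with `x * z(x) ∈ [0,1)^m`; (ii) the coordinates of `z(x)` are `O((max_i |x_i|)^{k^{m-1}})`. -/
theorem malcev_fundamental_domain (k m : ℕ) (hk : 1 ≤ k) (hm : 1 ≤ m)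
    (P : Fin m → MvPolynomial (Fin m ⊕ Fin m) ℚ)
    (hP0 : ∀ i : Fin m, (i : ℕ) = 0 → P i = 0)
    (hPdeg : ∀ i, (P i).totalDegree ≤ k - 1)
    (hPvars : ∀ i : Fin m, ∀ v ∈ (P i).vars, Sum.elim Fin.val Fin.val v < (i : ℕ)) :
    (∀ x : Fin m → ℝ, ∃! z : Fin m → ℤ,
      ∀ i, malStar P x (fun j => (z j : ℝ)) i ∈ Set.Ico (0 : ℝ) 1) ∧
    ∃ C : ℝ, 0 < C ∧ ∃ N₀ : ℝ, 0 < N₀ ∧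
      ∀ x : Fin m → ℝ, N₀ < ‖x‖ →
        ∀ z : Fin m → ℤ, (∀ i, malStar P x (fun j => (z j : ℝ)) i ∈ Set.Ico (0 : ℝ) 1) →
          ∀ i, |(z i : ℝ)| ≤ C * ‖x‖ ^ (k ^ (m - 1)) :=
  malcev_fundamental_domain_general k m hk P hP0 hPdeg hPvars
end
end

section
/- Fix integers k ≥ 2 and m ≥ 1 and polynomials P_1, …, P_{m−1}, where P_i ∈ ℚ[s_1,…,s_i,t_1,…,t_i] has total degree at most k−1, defining the operation * and powers x^{*n} on ℝ^m as in the context. For x ∈ ℝ^m and n ∈ ℕ let z_n(x) = (z_{1,n}(x),…,z_{m,n}(x)) ∈ ℤ^m be the unique integer vector with x^{*n} * z_n(x) ∈ [0,1)^m. Then for every M > 0 there exist constants c_2 > 0 and C > 0 (depending on M and on the P_i) such that for all x ∈ [−M, M]^m, all n ∈ ℕ, and all 1 ≤ i ≤ m, one has |z_{i,n}(x)| ≤ C n^{c_2}. -/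
open Filter Topology

noncomputable section

/-! Because `P i` only involves coordinates of index `< i`, the coordinates of `x^{*n}` and of
`z` can be bounded one at a time. The `j`-th coordinate of `x^{*(n+1)} - x^{*n}` is
`x_j + P_j(x, x^{*n})`, a polynomial in `x` and earlier coordinates of `x^{*n}`, and
`z_i = (x^{*n} * z)_i - x^{*n}_i - P_i(x^{*n}, z)` with `(x^{*n} * z)_i ∈ [0, 1)`. Functions bounded
by `C n^e` on a set where `n ≥ 1` form a subalgebra, so induction on the coordinate index shows
that all these quantities are polynomially bounded in `n`, the telescoping sum for the powers
costing one extra power of `n`. -/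

open Asymptotics

theorem MvPolynomial.aeval_mem_of_forall_mem_vars {R S σ : Type*} [CommSemiring R] [CommSemiring S]
    [Algebra R S] {A : Subalgebra R S} (p : MvPolynomial σ R) {v : σ → S}
    (hv : ∀ j ∈ p.vars, v j ∈ A) : aeval v p ∈ A := by
  classical
  set w : σ → S := fun j => if j ∈ p.vars then v j else 0
  have hrestrict : aeval v p = aeval w p :=
    eval₂Hom_congr' rfl (fun j hj _ => by simp [w, hj]) rfl
  have hrange : aeval w p ∈ Algebra.adjoin R (Set.range w) := by
    rw [← aeval_range]; exact AlgHom.mem_range_self _ p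
  rw [hrestrict]
  refine Algebra.adjoin_le ?_ hrange
  rintro _ ⟨j, rfl⟩
  by_cases hj : j ∈ p.vars
  · simpa [w, hj] using hv j hj
  · simp [w, hj]

theorem MvPolynomial.aeval_apply_mem {R S ι σ : Type*} [CommSemiring R] [CommSemiring S]
    [Algebra R S] {A : Subalgebra R (ι → S)} (p : MvPolynomial σ R) {v : ι → σ → S}
    (hv : ∀ j ∈ p.vars, (fun i => v i j) ∈ A) : (fun i => aeval (v i) p) ∈ A := by
  have hpointwise : (fun i => aeval (v i) p) = aeval (fun j i => v i j) p := by
    funext i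
    exact (DFunLike.congr_fun
      (comp_aeval (fun j i => v i j) (Pi.evalAlgHom R (fun _ : ι => S) i)) p).symm
  exact hpointwise ▸ aeval_mem_of_forall_mem_vars p hv

section PolyBounded

variable {ι : Type*} (l : Filter ι) {w : ι → ℝ}

lemma isBigO_pow_of_le (hw : ∀ᶠ i in l, 1 ≤ w i) {e e' : ℕ} (h : e ≤ e') :
    (w ^ e) =O[l] (w ^ e') :=
  IsBigO.of_bound 1 <| hw.mono fun i hi => by
    rw [one_mul, Pi.pow_apply, Pi.pow_apply, norm_pow, norm_pow]
    exact pow_le_pow_right₀ (hi.trans (le_abs_self _)) h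

def polyBoundedSubalgebra (hw : ∀ᶠ i in l, 1 ≤ w i) : Subalgebra ℝ (ι → ℝ) where
  carrier := {f | ∃ e : ℕ, f =O[l] (w ^ e)}
  mul_mem' := by
    rintro f g ⟨e, hf⟩ ⟨e', hg⟩
    exact ⟨e + e', by rw [pow_add]; exact hf.mul hg⟩
  add_mem' := by
    rintro f g ⟨e, hf⟩ ⟨e', hg⟩
    exact ⟨max e e', (hf.trans (isBigO_pow_of_le l hw (le_max_left _ _))).add
      (hg.trans (isBigO_pow_of_le l hw (le_max_right _ _)))⟩
  algebraMap_mem' c := ⟨0, by rw [pow_zero]; exact isBigO_const_one ℝ c l⟩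

lemma abs_mem_polyBoundedSubalgebra (hw : ∀ᶠ i in l, 1 ≤ w i) {f : ι → ℝ}
    (hf : f ∈ polyBoundedSubalgebra l hw) : (fun i => |f i|) ∈ polyBoundedSubalgebra l hw :=
  let ⟨e, hf⟩ := hf; ⟨e, isBigO_abs_left.2 hf⟩

lemma mem_polyBoundedSubalgebra_principal_iff {s : Set ι} (hw : ∀ᶠ i in 𝓟 s, 1 ≤ w i)
    {f : ι → ℝ} :
    f ∈ polyBoundedSubalgebra (𝓟 s) hw ↔ ∃ C : ℝ, ∃ e : ℕ, ∀ i ∈ s, |f i| ≤ C * w i ^ e := by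
  have hw_abs (i : ι) (hi : i ∈ s) : |w i| = w i :=
    abs_of_nonneg (zero_le_one.trans (mem_principal.1 hw hi))
  refine ⟨fun ⟨e, hf⟩ => ?_, fun ⟨C, e, hf⟩ => ⟨e, isBigO_principal.2 ⟨C, fun i hi => ?_⟩⟩⟩
  · obtain ⟨C, hC⟩ := isBigO_principal.1 hf
    exact ⟨C, e, fun i hi => by simpa [hw_abs i hi] using hC i hi⟩
  · simpa [hw_abs i hi] using hf i hi

end PolyBounded

lemma abs_le_mul_pow_succ_of_abs_sub_le {u : ℕ → ℝ} {C : ℝ} {e : ℕ} (h₁ : |u 1| ≤ C)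
    (hstep : ∀ n ≥ 1, |u (n + 1) - u n| ≤ C * n ^ e) : ∀ n ≥ 1, |u n| ≤ C * n ^ (e + 1) := by
  have hC : 0 ≤ C := (abs_nonneg _).trans h₁
  intro n hn
  induction n, hn using Nat.le_induction with
  | base => simpa using h₁
  | succ n hn ih =>
    have hn₀ : (0 : ℝ) ≤ n := n.cast_nonneg
    calc |u (n + 1)| ≤ |u n| + |u (n + 1) - u n| := by
          linarith [abs_sub_abs_le_abs_sub (u (n + 1)) (u n)]
      _ ≤ C * n ^ (e + 1) + C * n ^ e := add_le_add ih (hstep n hn)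
      _ = C * (n ^ e * (n + 1)) := by ring
      _ ≤ C * ((n + 1 : ℕ) : ℝ) ^ (e + 1) := by
        push_cast
        rw [pow_succ]
        gcongr
        linarith

lemma aeval_sumElim_mem_of_vars_lt {ι : Type*} {m j : ℕ} {A : Subalgebra ℚ (ι → ℝ)}
    (Q : MvPolynomial (Fin m ⊕ Fin m) ℚ) (hQ : ∀ v ∈ Q.vars, Sum.elim Fin.val Fin.val v < j)
    {a b : ι → Fin m → ℝ} (ha : ∀ t, (fun p => a p t) ∈ A)
    (hb : ∀ t : Fin m, (t : ℕ) < j → (fun p => b p t) ∈ A) :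
    (fun p => MvPolynomial.aeval (Sum.elim (a p) (b p)) Q) ∈ A :=
  MvPolynomial.aeval_apply_mem Q fun v hv =>
    match v, hQ v hv with
    | .inl t, _ => ha t
    | .inr t, h => hb t h

section Malcev

variable {m : ℕ} (P : Fin m → MvPolynomial (Fin m ⊕ Fin m) ℚ)

lemma malPow_succ (x : Fin m → ℝ) {n : ℕ} (hn : 1 ≤ n) :
    malPow P x (n + 1) = malStar P x (malPow P x n) := by
  obtain ⟨n, rfl⟩ := Nat.exists_eq_add_of_le' hn
  rfl

theorem exists_abs_malPow_le
    (hPvars : ∀ i : Fin m, ∀ v ∈ (P i).vars, Sum.elim Fin.val Fin.val v < (i : ℕ))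
    (M : ℝ) (j : Fin m) :
    ∃ C : ℝ, ∃ e : ℕ, ∀ x : Fin m → ℝ, (∀ i, x i ∈ Set.Icc (-M) M) →
      ∀ n ≥ 1, |malPow P x n j| ≤ C * n ^ e := by
  set s : Set ((Fin m → ℝ) × ℕ) := {p | (∀ i, p.1 i ∈ Set.Icc (-M) M) ∧ 1 ≤ p.2}
  have hw : ∀ᶠ p in 𝓟 s, (1 : ℝ) ≤ p.2 := fun p hp => by exact_mod_cast hp.2
  set A := polyBoundedSubalgebra (𝓟 s) hw
  have hmem (f) := mem_polyBoundedSubalgebra_principal_iff hw (f := f)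
  suffices ∀ i, (fun p : (Fin m → ℝ) × ℕ => malPow P p.1 p.2 i) ∈ A by
    obtain ⟨C, e, h⟩ := (hmem _).1 (this j)
    exact ⟨C, e, fun x hx n hn => h (x, n) ⟨hx, hn⟩⟩
  have hcoord (t : Fin m) : (fun p : (Fin m → ℝ) × ℕ => p.1 t) ∈ A :=
    (hmem _).2 ⟨M, 0, fun p hp => by simpa using abs_le.2 (hp.1 t)⟩
  intro i
  induction i using WellFoundedLT.induction with
  | ind j ih =>
  have hincrement : (fun p : (Fin m → ℝ) × ℕ =>
      p.1 j + MvPolynomial.aeval (Sum.elim p.1 (malPow P p.1 p.2)) (P j)) ∈ A :=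
    add_mem (hcoord j) (aeval_sumElim_mem_of_vars_lt (A := A.restrictScalars ℚ) (P j) (hPvars j)
      hcoord fun t ht => ih t ht)
  obtain ⟨C, e, hC⟩ := (hmem _).1 hincrement
  refine (hmem _).2 ⟨max C M, e + 1, fun ⟨x, n⟩ ⟨hx, hn⟩ =>
    abs_le_mul_pow_succ_of_abs_sub_le (u := fun n => malPow P x n j) ?_ ?_ n hn⟩
  · exact (abs_le.2 (hx j)).trans (le_max_right _ _)
  · intro n hn
    calc |malPow P x (n + 1) j - malPow P x n j|
        = |x j + MvPolynomial.aeval (Sum.elim x (malPow P x n)) (P j)| := by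
          rw [malPow_succ P x hn, malStar]; ring_nf
      _ ≤ C * n ^ e := hC (x, n) ⟨hx, hn⟩
      _ ≤ max C M * n ^ e := by gcongr; exact le_max_left _ _

theorem exists_abs_le_of_malStar_mem_Ico
    (hPvars : ∀ i : Fin m, ∀ v ∈ (P i).vars, Sum.elim Fin.val Fin.val v < (i : ℕ)) (M : ℝ) :
    ∃ C : ℝ, ∃ e : ℕ, ∀ x : Fin m → ℝ, (∀ i, x i ∈ Set.Icc (-M) M) → ∀ n ≥ 1,
      ∀ z : Fin m → ℤ,
        (∀ i, malStar P (malPow P x n) (fun j => (z j : ℝ)) i ∈ Set.Ico (0 : ℝ) 1) →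
          ∀ i, |(z i : ℝ)| ≤ C * n ^ e := by
  set s : Set ((Fin m → ℝ) × ℕ × (Fin m → ℤ)) := {q | (∀ i, q.1 i ∈ Set.Icc (-M) M) ∧
    1 ≤ q.2.1 ∧ ∀ i, malStar P (malPow P q.1 q.2.1) (fun j => (q.2.2 j : ℝ)) i ∈ Set.Ico (0 : ℝ) 1}
  have hw : ∀ᶠ q in 𝓟 s, (1 : ℝ) ≤ q.2.1 := fun q hq => by exact_mod_cast hq.2.1
  set A := polyBoundedSubalgebra (𝓟 s) hw
  have hmem (f) := mem_polyBoundedSubalgebra_principal_iff hw (f := f)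
  have hpow (t : Fin m) :
      (fun q : (Fin m → ℝ) × ℕ × (Fin m → ℤ) => malPow P q.1 q.2.1 t) ∈ A := by
    obtain ⟨C, e, h⟩ := exists_abs_malPow_le P hPvars M t
    exact (hmem _).2 ⟨C, e, fun q hq => h q.1 hq.1 q.2.1 hq.2.1⟩
  have hstar (t : Fin m) : (fun q : (Fin m → ℝ) × ℕ × (Fin m → ℤ) =>
      malStar P (malPow P q.1 q.2.1) (fun j => (q.2.2 j : ℝ)) t) ∈ A := by
    refine (hmem _).2 ⟨1, 0, fun q hq => ?_⟩
    obtain ⟨hlo, hhi⟩ := hq.2.2 t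
    rw [pow_zero, one_mul, abs_le]
    constructor <;> linarith
  have hz (i : Fin m) : (fun q : (Fin m → ℝ) × ℕ × (Fin m → ℤ) => (q.2.2 i : ℝ)) ∈ A := by
    induction i using WellFoundedLT.induction with
    | ind i ih =>
    convert sub_mem (sub_mem (hstar i) (hpow i)) (aeval_sumElim_mem_of_vars_lt
      (A := A.restrictScalars ℚ) (P i) (hPvars i) hpow fun t ht => ih t ht) using 1
    funext q
    simp only [Pi.sub_apply, malStar]
    ring
  obtain ⟨C, e, h⟩ := (hmem _).1 (sum_mem fun i _ => abs_mem_polyBoundedSubalgebra _ hw (hz i) :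
    ∑ i, (fun q : (Fin m → ℝ) × ℕ × (Fin m → ℤ) => |(q.2.2 i : ℝ)|) ∈ A)
  refine ⟨C, e, fun x hx n hn z hz i => le_trans ?_ (h (x, n, z) ⟨hx, hn, hz⟩)⟩
  rw [Finset.sum_apply]
  exact (Finset.single_le_sum (f := fun i => |(z i : ℝ)|) (fun _ _ => abs_nonneg _)
    (Finset.mem_univ i)).trans (le_abs_self _)

end Malcev

theorem malcev_power_fundamental_domain_bound_general (m : ℕ)
    (P : Fin m → MvPolynomial (Fin m ⊕ Fin m) ℚ)
    (hPvars : ∀ i : Fin m, ∀ v ∈ (P i).vars, Sum.elim Fin.val Fin.val v < (i : ℕ))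
    (M : ℝ) :
    ∃ c₂ : ℝ, 0 < c₂ ∧ ∃ C : ℝ, 0 < C ∧
      ∀ x : Fin m → ℝ, (∀ i, x i ∈ Set.Icc (-M) M) →
        ∀ n : ℕ, 1 ≤ n →
          ∀ z : Fin m → ℤ,
            (∀ i, malStar P (malPow P x n) (fun j => (z j : ℝ)) i ∈ Set.Ico (0 : ℝ) 1) →
            ∀ i, |(z i : ℝ)| ≤ C * (n : ℝ) ^ c₂ := by
  obtain ⟨C, e, hbound⟩ := exists_abs_le_of_malStar_mem_Ico P hPvars M
  refine ⟨e + 1, by positivity, max C 1, by positivity, fun x hx n hn z hz i => ?_⟩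
  have hn₁ : (1 : ℝ) ≤ n := by exact_mod_cast hn
  calc |(z i : ℝ)| ≤ C * n ^ e := hbound x hx n hn z hz i
    _ ≤ max C 1 * n ^ (e + 1) := by
      gcongr
      · exact le_max_left _ _
      · exact e.le_succ
    _ = max C 1 * (n : ℝ) ^ ((e : ℝ) + 1) := by rw [← Real.rpow_natCast]; push_cast; rfl

/-- Corollary 4.6 of the paper: for `x ∈ [-M, M]^m`, the integer vector `z_n(x)` with
`x^{*n} * z_n(x) ∈ [0,1)^m` has coordinates bounded by `C n^{c₂}`. -/
theorem malcev_power_fundamental_domain_bound (k m : ℕ) (hk : 2 ≤ k) (hm : 1 ≤ m)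
    (P : Fin m → MvPolynomial (Fin m ⊕ Fin m) ℚ)
    (hP0 : ∀ i : Fin m, (i : ℕ) = 0 → P i = 0)
    (hPdeg : ∀ i, (P i).totalDegree ≤ k - 1)
    (hPvars : ∀ i : Fin m, ∀ v ∈ (P i).vars, Sum.elim Fin.val Fin.val v < (i : ℕ))
    (M : ℝ) (hM : 0 < M) :
    ∃ c₂ : ℝ, 0 < c₂ ∧ ∃ C : ℝ, 0 < C ∧
      ∀ x : Fin m → ℝ, (∀ i, x i ∈ Set.Icc (-M) M) →
        ∀ n : ℕ, 1 ≤ n →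
          ∀ z : Fin m → ℤ,
            (∀ i, malStar P (malPow P x n) (fun j => (z j : ℝ)) i ∈ Set.Ico (0 : ℝ) 1) →
            ∀ i, |(z i : ℝ)| ≤ C * (n : ℝ) ^ c₂ :=
  malcev_power_fundamental_domain_bound_general m P hPvars M
end
end

section
/- Let E ⊆ ℕ be a sublacunary set. Then for every d ∈ ℕ and every ε > 0 there exist two finite disjoint subsets A, B ⊆ E such that no α ∈ 𝕋^d = (ℝ/ℤ)^d ε-separates A and B; that is, for every α ∈ 𝕋^d there exist a ∈ A and b ∈ B with ‖aα − bα‖_{𝕋^d} < ε. (This is the 1-step, torus, case of the paper's key non-separability proposition for sublacunary sets.) -/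
open Filter Topology

noncomputable section

/-! If all pairs of disjoint finite subsets of `E` were `ε`-separable, then for the first `n + 1`
elements `S` of `E` every splitting `T ∪ (S \ T)` would be realised by some `α_T`. Quantise `α_T`
at scale `1 / (M max S)` and the points `a • α_T` at scale `1 / M`, where `2 / M < ε`: by the
triangle inequality, `T` is determined by the cell of `α_T` together with the cells of the
`a • α_T`, `a ∈ T`. Hence `2 ^ (n + 1) ≤ (M max S) ^ d * 2 ^ (M ^ d)`, which fails for large `n`
since `max S = exp (o n)` by sublacunarity. -/

namespace AddCircle

variable {p : ℝ} [Fact (0 < p)]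

theorem exists_cell_map_dist_lt (m : ℕ) [NeZero m] :
    ∃ f : AddCircle p → Fin m, ∀ x y, f x = f y → dist x y < p / m := by
  have hp : 0 < p := Fact.out
  have hm : (0 : ℝ) < m := by exact_mod_cast Nat.pos_of_neZero m
  let u : AddCircle p → ℝ := fun x => equivIco p 0 x
  have hu : ∀ x, u x ∈ Set.Ico 0 p := fun x => by simpa using (equivIco p 0 x).2
  let t : AddCircle p → ℝ := fun x => u x * m / p
  have ht_nonneg : ∀ x, 0 ≤ t x := fun x => by have := (hu x).1; positivity
  have ht_lt : ∀ x, t x < m := fun x => by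
    rw [div_lt_iff₀ hp, mul_comm]; exact mul_lt_mul_of_pos_left (hu x).2 hm
  refine ⟨fun x => ⟨⌊t x⌋₊, (Nat.floor_lt (ht_nonneg x)).2 (ht_lt x)⟩, fun x y hxy => ?_⟩
  have hfloor : ⌊t x⌋ = ⌊t y⌋ := by
    rw [← Int.natCast_floor_eq_floor (ht_nonneg x), ← Int.natCast_floor_eq_floor (ht_nonneg y)]
    exact congrArg (fun k : Fin m => (k : ℤ)) hxy
  calc dist x y = dist (u x : AddCircle p) (u y) := by simp [u]
    _ ≤ |u x - u y| := by
      rw [dist_eq_norm, ← coe_sub]; exact QuotientAddGroup.norm_mk_le_norm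
    _ = |t x - t y| * (p / m) := by
      rw [← abs_of_pos (div_pos hp hm), ← abs_mul]; congr 1; simp only [t]; field_simp
    _ < p / m := mul_lt_of_lt_one_left (by positivity) (Int.abs_sub_lt_one_of_floor_eq_floor hfloor)

theorem exists_pi_cell_map_dist_lt (ι : Type*) [Fintype ι] (m : ℕ) [NeZero m] :
    ∃ f : (ι → AddCircle p) → (ι → Fin m), ∀ x y, f x = f y → dist x y < p / m := by
  have hpm : 0 < p / m := div_pos Fact.out (by exact_mod_cast Nat.pos_of_neZero m)
  obtain ⟨f, hf⟩ := exists_cell_map_dist_lt (p := p) m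
  exact ⟨fun x i => f (x i), fun x y h => (dist_pi_lt_iff hpm).2 fun i => hf _ _ (congrFun h i)⟩

end AddCircle

section Separation

variable {G : Type*} [SeminormedAddCommGroup G]

def EpsSeparates (ε : ℝ) (α : G) (A B : Finset ℕ) : Prop :=
  ∀ a ∈ A, ∀ b ∈ B, ε ≤ dist (a • α) (b • α)

theorem dist_nsmul_le (a : ℕ) (x y : G) : dist (a • x) (a • y) ≤ a * dist x y := by
  rw [dist_eq_norm, ← nsmul_sub, dist_eq_norm]; exact norm_nsmul_le

theorem two_pow_card_le_of_epsSeparates {C D : Type*} [Fintype C] [Fintype D]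
    {f : G → C} {g : G → D} {δ η ε : ℝ} (hf : ∀ x y, f x = f y → dist x y < δ)
    (hg : ∀ x y, g x = g y → dist x y < η) {S : Finset ℕ} (hS : ∀ a ∈ S, a * δ + η ≤ ε)
    (hsep : ∀ T ⊆ S, ∃ α : G, EpsSeparates ε α T (S \ T)) :
    2 ^ S.card ≤ Fintype.card C * 2 ^ Fintype.card D := by
  classical
  choose! α hα using hsep
  let code : Finset ℕ → C × Finset D := fun T => (f (α T), T.image fun a => g (a • α T))
  have subset_of_code_eq : ∀ T ⊆ S, ∀ T' ⊆ S, code T = code T' → T ⊆ T' := by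
    intro T hT T' hT' hcode a ha
    by_contra ha'
    obtain ⟨hfα, himage⟩ := Prod.mk_inj.1 hcode
    obtain ⟨b, hb, hgb⟩ : ∃ b ∈ T', g (b • α T') = g (a • α T) :=
      Finset.mem_image.1 (himage ▸ Finset.mem_image_of_mem (fun a => g (a • α T)) ha)
    have hsep := hα T' hT' b hb a (Finset.mem_sdiff.2 ⟨hT ha, ha'⟩)
    have hscale : dist (a • α T) (a • α T') ≤ a * δ :=
      (dist_nsmul_le a _ _).trans (mul_le_mul_of_nonneg_left (hf _ _ hfα).le a.cast_nonneg)
    have := dist_triangle (b • α T') (a • α T) (a • α T')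
    linarith [hg _ _ hgb, hS a (hT ha)]
  have hinj : Set.InjOn code S.powerset := fun T hT T' hT' hcode => by
    rw [Finset.coe_powerset, Set.mem_preimage, Set.mem_powerset_iff, Finset.coe_subset] at hT hT'
    exact (subset_of_code_eq T hT T' hT' hcode).antisymm (subset_of_code_eq T' hT' T hT hcode.symm)
  simpa [Fintype.card_finset] using
    Finset.card_le_card_of_injOn code (fun T _ => Finset.mem_univ (code T)) hinj

end Separation

theorem IsSublacunarySeq.eventually_mul_pow_mul_lt_pow {r : ℕ → ℕ} (hr : IsSublacunarySeq r)
    {c K b : ℕ} (hc : 0 < c) (hK : 0 < K) (hb : 1 < b) (d : ℕ) :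
    ∀ᶠ n in atTop, (c * r n) ^ d * K < b ^ n := by
  have hlog : Tendsto (fun n : ℕ => (d * Real.log c + Real.log K) / n + d * (Real.log (r n) / n))
      atTop (𝓝 0) := by
    simpa using (tendsto_const_div_atTop_nhds_zero_nat _).add (hr.2.2.const_mul (d : ℝ))
  have hb' : (1 : ℝ) < b := by exact_mod_cast hb
  filter_upwards [hlog.eventually (gt_mem_nhds (Real.log_pos hb')), eventually_gt_atTop 0]
    with n hn hn0
  have hr0 : (0 : ℝ) < r n := by exact_mod_cast hr.1 n
  have hn0' : (0 : ℝ) < n := by exact_mod_cast hn0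
  suffices Real.log (((c * r n) ^ d * K : ℕ) : ℝ) < Real.log ((b ^ n : ℕ) : ℝ) by
    exact_mod_cast (Real.log_lt_log_iff
      (by exact_mod_cast Nat.mul_pos (pow_pos (Nat.mul_pos hc (hr.1 n)) d) hK)
      (by exact_mod_cast pow_pos (zero_lt_one.trans hb) n)).1 this
  rw [mul_div_assoc', ← add_div, div_lt_iff₀ hn0'] at hn
  push_cast
  rw [Real.log_mul (by positivity) (by positivity), Real.log_pow, Real.log_mul (by positivity)
    hr0.ne', Real.log_pow]
  linarith

/-- For a sublacunary set `E`, every `d ∈ ℕ` and `ε > 0`, there are two finite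
disjoint subsets `A, B ⊆ E` that are not `ε`-separated by any `α ∈ 𝕋^d`. -/
theorem sublacunary_not_eps_separable (r : ℕ → ℕ) (hr : IsSublacunarySeq r)
    (d : ℕ) (ε : ℝ) (hε : 0 < ε) :
    ∃ A B : Finset ℕ, ↑A ⊆ Set.range r ∧ ↑B ⊆ Set.range r ∧ Disjoint A B ∧
      ∀ α : Fin d → AddCircle (1 : ℝ), ∃ a ∈ A, ∃ b ∈ B, dist (a • α) (b • α) < ε := by
  by_contra! hsep
  obtain ⟨M, hM⟩ := exists_nat_gt (2 / ε)
  have hM0 : 0 < M := by exact_mod_cast (by positivity : 0 < 2 / ε).trans hM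
  obtain ⟨n, hn⟩ := (hr.eventually_mul_pow_mul_lt_pow hM0 (Nat.two_pow_pos (M ^ d)) one_lt_two
    d).exists
  have : NeZero M := ⟨hM0.ne'⟩
  have : NeZero (M * r n) := ⟨(Nat.mul_pos hM0 (hr.1 n)).ne'⟩
  obtain ⟨f, hf⟩ := AddCircle.exists_pi_cell_map_dist_lt (p := 1) (Fin d) (M * r n)
  obtain ⟨g, hg⟩ := AddCircle.exists_pi_cell_map_dist_lt (p := 1) (Fin d) M
  let S := (Finset.range (n + 1)).image r
  have hSr : ↑S ⊆ Set.range r := by simp [S]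
  have hS : ∀ a ∈ S, a * (1 / (M * r n : ℕ)) + 1 / M ≤ ε :=
    Finset.forall_mem_image.2 fun k hk => by
      have hrk : r k ≤ r n := hr.2.1.monotone (Nat.lt_succ_iff.1 (Finset.mem_range.1 hk))
      have hrn : (0 : ℝ) < r n := by exact_mod_cast hr.1 n
      calc (r k : ℝ) * (1 / (M * r n : ℕ)) + 1 / M ≤ r n * (1 / (M * r n : ℕ)) + 1 / M := by
            gcongr
        _ = 2 / M := by push_cast; field_simp; ring
        _ ≤ ε := ((div_lt_comm₀ hε (by positivity)).1 hM).le
  have hcount := two_pow_card_le_of_epsSeparates hf hg hS fun T hT =>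
    hsep T (S \ T) ((Finset.coe_subset.2 hT).trans hSr)
      ((Finset.coe_subset.2 Finset.sdiff_subset).trans hSr) Finset.disjoint_sdiff
  rw [Finset.card_image_of_injective _ hr.2.1.injective, Finset.card_range] at hcount
  simp only [Fintype.card_fun, Fintype.card_fin] at hcount
  omega
end
end

section
/- Let E = {2^n : n ∈ ℕ} ∪ {2^n + 2n − 1 : n ∈ ℕ}. Then E is an I_0-set, but E + {0, 1} = {2^n : n ∈ ℕ} ∪ {2^n + 2n − 1 : n ∈ ℕ} ∪ {2^n + 1 : n ∈ ℕ} ∪ {2^n + 2n : n ∈ ℕ} is not an I_0-set. In particular, the sum of an I_0-set and a finite set need not be an I_0-set. -/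
/-
Each residue class mod 30 of `E = {2^n} ∪ {2^n + 2n - 1}` is lacunary with ratio at least 13/3:
parity separates the two families, and within a family three consecutive terms are pairwise
incongruent mod 15. On such a set, nested intervals give a single frequency `α` for which
`𝐞 (v α)` lies within `3π/10 < 1` of prescribed unimodular values; averaging two characters
approximates any `f` with `|f| ≤ 1`, the residue classes are glued by the trigonometric
polynomials `1_{n ≡ a mod 30}`, and iterating on the error yields an exact interpolant as a
uniformly convergent series of trigonometric polynomials.

The set `E + {0, 1}` contains both `2^t` and `2^t + 2t`. By recurrence in the compact torus, a
Bohr almost periodic sequence has `ε`-almost periods among the even numbers `2t` with `t`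
arbitrarily large, so it cannot be `1` on `2^t` and `0` on `2^t + 2t`.
-/

open Filter Topology

noncomputable section

open Complex Real
open scoped FourierTransform

lemma cexp_two_pi_I_mul_eq_fourierChar (n : ℕ) (α : ℝ) :
    Complex.exp (2 * π * I * (n : ℂ) * (α : ℂ)) = 𝐞 (n * α) := by
  rw [fourierChar_apply]; push_cast; ring_nf

lemma isTrigPoly_iff {ψ : ℕ → ℂ} :
    IsTrigPoly ψ ↔ ∃ (k : ℕ) (c : Fin k → ℂ) (α : Fin k → ℝ), ∀ n : ℕ,
      ψ n = ∑ j, c j * 𝐞 (n * α j) := by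
  simp only [IsTrigPoly, cexp_two_pi_I_mul_eq_fourierChar]

lemma isTrigPoly_const_mul_fourierChar (c : ℂ) (α : ℝ) : IsTrigPoly fun n => c * 𝐞 (n * α) :=
  isTrigPoly_iff.2 ⟨1, ![c], ![α], by simp⟩

lemma isTrigPoly_zero : IsTrigPoly 0 :=
  ⟨0, ![], ![], by simp⟩

lemma IsTrigPoly.add_s17 {φ ψ : ℕ → ℂ} (hφ : IsTrigPoly φ) (hψ : IsTrigPoly ψ) :
    IsTrigPoly (φ + ψ) := by
  obtain ⟨k, c, α, hφ⟩ := hφ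
  obtain ⟨l, d, β, hψ⟩ := hψ
  refine ⟨k + l, Fin.append c d, Fin.append α β, fun n => ?_⟩
  simp [hφ, hψ, Fin.sum_univ_add]

lemma IsTrigPoly.const_mul {ψ : ℕ → ℂ} (hψ : IsTrigPoly ψ) (z : ℂ) :
    IsTrigPoly fun n => z * ψ n := by
  obtain ⟨k, c, α, hψ⟩ := hψ
  exact ⟨k, fun j => z * c j, α, fun n => by simp [hψ, Finset.mul_sum, mul_assoc]⟩

lemma IsTrigPoly.mul_s17 {φ ψ : ℕ → ℂ} (hφ : IsTrigPoly φ) (hψ : IsTrigPoly ψ) :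
    IsTrigPoly (φ * ψ) := by
  obtain ⟨k, c, α, hφ⟩ := isTrigPoly_iff.1 hφ
  obtain ⟨l, d, β, hψ⟩ := isTrigPoly_iff.1 hψ
  refine isTrigPoly_iff.2 ⟨k * l,
    fun j => c (finProdFinEquiv.symm j).1 * d (finProdFinEquiv.symm j).2,
    fun j => α (finProdFinEquiv.symm j).1 + β (finProdFinEquiv.symm j).2, fun n => ?_⟩
  rw [Pi.mul_apply, hφ, hψ, Finset.sum_mul_sum, ← Fintype.sum_prod_type']
  refine Fintype.sum_equiv finProdFinEquiv _ _ fun p => ?_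
  simp only [Equiv.symm_apply_apply, mul_add, AddChar.map_add_eq_mul, Circle.coe_mul]
  ring

lemma isTrigPoly_sum {ι : Type*} (s : Finset ι) {ψ : ι → ℕ → ℂ} (h : ∀ i ∈ s, IsTrigPoly (ψ i)) :
    IsTrigPoly fun n => ∑ i ∈ s, ψ i n := by
  classical
  induction s using Finset.induction_on with
  | empty => exact isTrigPoly_zero
  | insert i s hi ih =>
    simp only [Finset.sum_insert hi]
    exact (h i (s.mem_insert_self i)).add_s17 (ih fun j hj => h j (Finset.mem_insert_of_mem hj))

lemma isTrigPoly_indicator_zmod (M : ℕ) [NeZero M] (a : ZMod M) :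
    IsTrigPoly fun n => if (n : ZMod M) = a then 1 else 0 := by
  have hchar (n : ℕ) (x : ZMod M) : ZMod.stdAddChar (x * ((n : ZMod M) - a)) =
      ZMod.stdAddChar (-(x * a)) * 𝐞 (n * (x.val / M : ℝ)) := by
    rw [mul_sub, sub_eq_neg_add, AddChar.map_add_eq_mul]
    congr 1
    conv_lhs => rw [← ZMod.natCast_zmod_val x, ← Nat.cast_mul]
    rw [ZMod.stdAddChar_apply, ZMod.toCircle_natCast, fourierChar_apply]
    push_cast
    ring_nf
  have key (n : ℕ) : (if (n : ZMod M) = a then 1 else 0 : ℂ) =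
      ∑ x : ZMod M, (M : ℂ)⁻¹ * ZMod.stdAddChar (-(x * a)) * 𝐞 (n * (x.val / M : ℝ)) := by
    simp_rw [mul_assoc, ← hchar, ← Finset.mul_sum,
      AddChar.sum_mulShift _ (ZMod.isPrimitive_stdAddChar M), sub_eq_zero, ZMod.card]
    split_ifs <;> simp [NeZero.ne M]
  simp_rw [key]
  exact isTrigPoly_sum _ fun x _ => isTrigPoly_const_mul_fourierChar _ _

-- The bound `‖ψ‖ ≤ 1` on all of `ℕ` makes the iterated corrections converge uniformly.
def IsApproxI0Set (E : Set ℕ) (q : ℝ) : Prop :=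
  ∀ f : ℕ → ℂ, (∀ n ∈ E, ‖f n‖ ≤ 1) →
    ∃ ψ : ℕ → ℂ, IsTrigPoly ψ ∧ (∀ n, ‖ψ n‖ ≤ 1) ∧ ∀ n ∈ E, ‖ψ n - f n‖ ≤ q

lemma IsApproxI0Set.of_zmod_pieces {E : Set ℕ} {q : ℝ} (M : ℕ) [NeZero M]
    (h : ∀ a : ZMod M, IsApproxI0Set {n ∈ E | (n : ZMod M) = a} q) : IsApproxI0Set E q := by
  intro f hf
  choose Ψ hΨ hΨ_le hΨ_approx using fun a => h a f fun n hn => hf n hn.1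
  have hsum (n : ℕ) :
      ∑ a : ZMod M, (if (n : ZMod M) = a then 1 else 0) * Ψ a n = Ψ n n := by
    simp [ite_mul]
  refine ⟨fun n => ∑ a : ZMod M, (if (n : ZMod M) = a then 1 else 0) * Ψ a n,
    isTrigPoly_sum _ fun a _ => (isTrigPoly_indicator_zmod M a).mul_s17 (hΨ a), fun n => ?_,
    fun n hn => ?_⟩
  · simpa only [hsum] using hΨ_le _ n
  · simpa only [hsum] using hΨ_approx _ n ⟨hn, rfl⟩

lemma isBohrAP_tsum {ψ : ℕ → ℕ → ℂ} (hψ : ∀ k, IsTrigPoly (ψ k)) {b : ℕ → ℝ} (hb : Summable b)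
    (hψb : ∀ k n, ‖ψ k n‖ ≤ b k) : IsBohrAP fun n => ∑' k, ψ k n := by
  intro ε hε
  obtain ⟨K, hK⟩ := ((tendsto_sum_nat_add b).eventually (gt_mem_nhds hε)).exists
  refine ⟨fun n => ∑ k ∈ Finset.range K, ψ k n, isTrigPoly_sum _ fun k _ => hψ k, fun n => ?_⟩
  dsimp only
  have hs : Summable fun k => ψ k n := .of_norm_bounded hb fun k => hψb k n
  rw [← hs.sum_add_tsum_nat_add K, add_sub_cancel_left]
  exact (tsum_of_norm_bounded ((summable_nat_add_iff K).2 hb).hasSum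
    fun k => hψb (k + K) n).trans_lt hK

lemma hasSum_pow_mul_of_sum_range_eq_sub {q : ℝ} (hq₀ : 0 ≤ q) (hq₁ : q < 1) {a r : ℕ → ℂ}
    (ha : ∀ k, ‖a k‖ ≤ 1) (hr : ∀ K, ‖r K‖ ≤ 1) {z : ℂ}
    (h : ∀ K, ∑ k ∈ Finset.range K, (q : ℂ) ^ k * a k = z - q ^ K * r K) :
    HasSum (fun k => (q : ℂ) ^ k * a k) z := by
  have hq_pow (k : ℕ) : ‖(q : ℂ) ^ k‖ = q ^ k := by
    rw [norm_pow, norm_real, Real.norm_of_nonneg hq₀]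
  rw [hasSum_iff_tendsto_nat_of_summable_norm, funext h]
  · have hrem : Tendsto (fun K => (q : ℂ) ^ K * r K) atTop (𝓝 0) := by
      refine squeeze_zero_norm (fun K => ?_) (tendsto_pow_atTop_nhds_zero_of_lt_one hq₀ hq₁)
      rw [norm_mul, hq_pow]
      exact mul_le_of_le_one_right (by positivity) (hr K)
    simpa using tendsto_const_nhds.sub hrem
  · refine (summable_geometric_of_lt_one hq₀ hq₁).of_nonneg_of_le (fun _ => norm_nonneg _)
      fun k => ?_
    rw [norm_mul, hq_pow]
    exact mul_le_of_le_one_right (by positivity) (ha k)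

lemma IsApproxI0Set.exists_hasSum {E : Set ℕ} {q : ℝ} (h : IsApproxI0Set E q) (hq₀ : 0 < q)
    (hq₁ : q < 1) {g : ℕ → ℂ} (hg : ∀ n ∈ E, ‖g n‖ ≤ 1) :
    ∃ Ψ : ℕ → ℕ → ℂ, (∀ k, IsTrigPoly (Ψ k)) ∧ (∀ k n, ‖Ψ k n‖ ≤ 1) ∧
      ∀ n ∈ E, HasSum (fun k => (q : ℂ) ^ k * Ψ k n) (g n) := by
  have hΨ (g : ℕ → ℂ) : ∃ ψ, IsTrigPoly ψ ∧ (∀ n, ‖ψ n‖ ≤ 1) ∧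
      ((∀ n ∈ E, ‖g n‖ ≤ 1) → ∀ n ∈ E, ‖g n - ψ n‖ ≤ q) := by
    by_cases hg : ∀ n ∈ E, ‖g n‖ ≤ 1
    · obtain ⟨ψ, hψ, hψ_le, hψ_approx⟩ := h g hg
      exact ⟨ψ, hψ, hψ_le, fun _ n hn => norm_sub_rev (g n) _ ▸ hψ_approx n hn⟩
    · exact ⟨0, isTrigPoly_zero, by simp, fun h => absurd h hg⟩
  choose Ψ hΨ_trig hΨ_le hΨ_approx using hΨ
  set r : ℕ → ℕ → ℂ := fun k => (fun g n => (g n - Ψ g n) / q)^[k] g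
  have hr_succ (k n : ℕ) : r (k + 1) n = (r k n - Ψ (r k) n) / q := by
    simp only [r, Function.iterate_succ_apply']
  have hr_le (k : ℕ) : ∀ n ∈ E, ‖r k n‖ ≤ 1 := by
    induction k with
    | zero => exact hg
    | succ k ih =>
      intro n hn
      rw [hr_succ, norm_div, norm_real, Real.norm_of_nonneg hq₀.le]
      exact div_le_one_of_le₀ (hΨ_approx (r k) ih n hn) hq₀.le
  have htel (n K : ℕ) :
      ∑ k ∈ Finset.range K, (q : ℂ) ^ k * Ψ (r k) n = g n - q ^ K * r K n := by
    induction K with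
    | zero => simp [r]
    | succ K ih =>
      rw [Finset.sum_range_succ, ih, pow_succ, hr_succ]
      have : (q : ℂ) ≠ 0 := ofReal_ne_zero.2 hq₀.ne'
      field_simp
      ring
  exact ⟨fun k => Ψ (r k), fun k => hΨ_trig _, fun k => hΨ_le _, fun n hn =>
    hasSum_pow_mul_of_sum_range_eq_sub hq₀.le hq₁ (fun k => hΨ_le _ n) (hr_le · n hn) (htel n)⟩

lemma IsApproxI0Set.isI0Set {E : Set ℕ} {q : ℝ} (h : IsApproxI0Set E q) (hq₀ : 0 < q)
    (hq₁ : q < 1) : IsI0Set E := by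
  rintro f ⟨C, hC⟩
  set C' := max C 1
  have hC' : 0 < C' := lt_max_of_lt_right one_pos
  have hf (n) (hn : n ∈ E) : ‖f n / C'‖ ≤ 1 := by
    rw [norm_div, norm_real, Real.norm_of_nonneg hC'.le]
    exact div_le_one_of_le₀ ((hC n hn).trans (le_max_left _ _)) hC'.le
  obtain ⟨Ψ, hΨ, hΨ_le, hsum⟩ := h.exists_hasSum hq₀ hq₁ hf
  have hbound (k n : ℕ) : ‖C' * ((q : ℂ) ^ k * Ψ k n)‖ ≤ C' * q ^ k := by
    rw [norm_mul, norm_mul, norm_pow, norm_real, norm_real, Real.norm_of_nonneg hC'.le,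
      Real.norm_of_nonneg hq₀.le, ← mul_assoc]
    exact mul_le_of_le_one_right (by positivity) (hΨ_le k n)
  refine ⟨fun n => ∑' k, C' * ((q : ℂ) ^ k * Ψ k n),
    isBohrAP_tsum (fun k => ((hΨ k).const_mul _).const_mul _)
      ((summable_geometric_of_lt_one hq₀.le hq₁).mul_left C') hbound, fun n hn => ?_⟩
  simp only [((hsum n hn).mul_left (C' : ℂ)).tsum_eq]
  exact mul_div_cancel₀ _ (ofReal_ne_zero.2 hC'.ne')

lemma exists_mem_Ico_mul_eq_add_intCast {a : ℝ} (ha : 0 < a) (c t : ℝ) :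
    ∃ y ∈ Set.Ico c (c + a⁻¹), ∃ z : ℤ, a * y = t + z := by
  refine ⟨(t + ⌈a * c - t⌉) / a, ⟨?_, ?_⟩, ⌈a * c - t⌉, mul_div_cancel₀ _ ha.ne'⟩
  · rw [le_div_iff₀ ha]
    linarith [Int.le_ceil (a * c - t)]
  · rw [div_lt_iff₀ ha, add_mul, inv_mul_cancel₀ ha.ne']
    linarith [Int.ceil_lt_add_one (a * c - t)]

lemma exists_mem_Icc_forall_abs_mul_sub_le {δ : ℝ} (hδ : 0 ≤ δ) (θ : ℕ → ℝ) (F : Finset ℕ)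
    (hpos : ∀ v ∈ F, 0 < v) (hlac : ∀ v ∈ F, ∀ w ∈ F, v < w → (1 + 2 * δ) * v ≤ 2 * δ * w)
    (c : ℝ) {ℓ : ℝ} (hℓ : 0 ≤ ℓ) (hℓF : ∀ v ∈ F, 1 + 2 * δ ≤ v * ℓ) :
    ∃ α ∈ Set.Icc c (c + ℓ), ∀ v ∈ F, ∃ z : ℤ, |v * α - θ v - z| ≤ δ := by
  induction F using Finset.induction_on_min generalizing c ℓ with
  | empty => exact ⟨c, ⟨le_rfl, by linarith⟩, by simp⟩
  | insert a s ha ih =>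
    have ha₀ : (0 : ℝ) < a := by exact_mod_cast hpos a (s.mem_insert_self a)
    -- `[y, y + 2δ/a]` is a component of the admissible set of the least element `a`; it fits in
    -- `[c, c + ℓ]` and is long enough for the induction hypothesis on `s`.
    obtain ⟨y, ⟨hcy, hyc⟩, z, hz⟩ := exists_mem_Ico_mul_eq_add_intCast ha₀ c (θ a - δ)
    have hs (v) (hv : v ∈ s) : 1 + 2 * δ ≤ v * (2 * δ / a) := by
      rw [mul_div_assoc', le_div_iff₀ ha₀]
      have := hlac a (s.mem_insert_self a) v (Finset.mem_insert_of_mem hv) (ha v hv)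
      linarith
    obtain ⟨α, ⟨hyα, hαy⟩, hα⟩ := ih (fun v hv => hpos v (Finset.mem_insert_of_mem hv))
      (fun v hv w hw => hlac v (Finset.mem_insert_of_mem hv) w (Finset.mem_insert_of_mem hw))
      y (by positivity) hs
    have haα : a * α ≤ a * y + 2 * δ := by
      have := mul_le_mul_of_nonneg_left hαy ha₀.le
      rwa [mul_add, mul_div_cancel₀ _ ha₀.ne'] at this
    refine ⟨α, ⟨hcy.trans hyα, ?_⟩, fun v hv => ?_⟩
    · have hℓa := hℓF a (s.mem_insert_self a)
      have : (1 + 2 * δ) / a ≤ ℓ := by rw [div_le_iff₀ ha₀]; linarith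
      have : (a : ℝ)⁻¹ + 2 * δ / a = (1 + 2 * δ) / a := by ring
      linarith
    · rcases Finset.mem_insert.1 hv with rfl | hv
      · refine ⟨z, abs_le.2 ⟨?_, ?_⟩⟩ <;> nlinarith [mul_le_mul_of_nonneg_left hyα ha₀.le]
      · exact hα v hv

lemma norm_fourierChar_sub_fourierChar_le (x y : ℝ) (z : ℤ) :
    ‖(𝐞 x : ℂ) - 𝐞 y‖ ≤ 2 * π * |x - y - z| := by
  have hx : 𝐞 x = 𝐞 y * 𝐞 (x - y - z) := by
    have hz : 𝐞 z = 1 := by rw [fourierChar_apply', Circle.exp_two_pi_mul_int]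
    rw [← mul_one (𝐞 y), ← hz, ← AddChar.map_add_eq_mul, ← AddChar.map_add_eq_mul]
    ring_nf
  rw [hx, Circle.coe_mul, ← mul_sub_one, norm_mul, Circle.norm_coe, one_mul, fourierChar_apply,
    mul_comm _ I]
  refine norm_exp_I_mul_ofReal_sub_one_le.trans_eq ?_
  rw [Real.norm_eq_abs, abs_mul, abs_of_pos two_pi_pos]

lemma exists_eq_add_div_two_of_norm_le_one {z : ℂ} (hz : ‖z‖ ≤ 1) :
    ∃ u v : Circle, z = (u + v) / 2 := by
  set β := Real.arccos ‖z‖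
  refine ⟨Circle.exp (arg z + β), Circle.exp (arg z - β), ?_⟩
  have hβ : Real.cos β = ‖z‖ := Real.cos_arccos (by linarith [norm_nonneg z]) hz
  have hsum : Complex.exp ((arg z + β : ℝ) * I) + Complex.exp ((arg z - β : ℝ) * I)
      = Complex.exp (arg z * I) * (2 * Complex.cos β) := by
    rw [two_cos, mul_add, ← Complex.exp_add, ← Complex.exp_add]
    push_cast
    ring_nf
  rw [Circle.coe_exp, Circle.coe_exp, hsum, ← ofReal_cos, hβ]
  conv_lhs => rw [← norm_mul_exp_arg_mul_I z]
  ring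

lemma exists_forall_norm_fourierChar_mul_sub_le {δ : ℝ} (hδ : 0 ≤ δ) {P : Set ℕ}
    (hpos : ∀ v ∈ P, 0 < v) (hlac : ∀ v ∈ P, ∀ w ∈ P, v < w → (1 + 2 * δ) * v ≤ 2 * δ * w)
    (w : ℕ → Circle) : ∃ α : ℝ, ∀ v ∈ P, ‖(𝐞 (v * α) : ℂ) - w v‖ ≤ 2 * π * δ := by
  have hw (v : ℕ) : ∃ θ, 𝐞 θ = w v := by
    obtain ⟨φ, hφ⟩ := Circle.exp_surjective (w v)
    exact ⟨φ / (2 * π), by rw [fourierChar_apply', mul_div_cancel₀ _ two_pi_pos.ne', hφ]⟩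
  choose θ hθ using hw
  let K (v : P) : Set ℝ := {α | ‖(𝐞 (v * α) : ℂ) - 𝐞 (θ v)‖ ≤ 2 * π * δ}
  have hK (v : P) : IsClosed (K v) := isClosed_le (by fun_prop) continuous_const
  have hfin (u : Finset P) : (Set.Icc 0 (1 + 2 * δ) ∩ ⋂ v ∈ u, K v).Nonempty := by
    obtain ⟨α, hα, hαu⟩ := exists_mem_Icc_forall_abs_mul_sub_le hδ θ
      (u.map (Function.Embedding.subtype _)) (by simpa using fun v hv _ => hpos v hv)
      (by simpa using fun v hv _ w hw _ => hlac v hv w hw) 0 (ℓ := 1 + 2 * δ) (by linarith) (by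
        simp only [Finset.mem_map, Function.Embedding.coe_subtype, forall_exists_index, and_imp]
        rintro _ v - rfl
        have : (1 : ℝ) ≤ v := by exact_mod_cast hpos v v.2
        nlinarith)
    refine ⟨α, by simpa using hα, Set.mem_iInter₂.2 fun v hv => ?_⟩
    obtain ⟨z, hz⟩ := hαu v (Finset.mem_map_of_mem _ hv)
    exact (norm_fourierChar_sub_fourierChar_le _ _ z).trans (by gcongr)
  obtain ⟨α, -, hα⟩ := isCompact_Icc.inter_iInter_nonempty K hK hfin
  exact ⟨α, fun v hv => hθ v ▸ Set.mem_iInter.1 hα ⟨v, hv⟩⟩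

lemma isApproxI0Set_of_lacunary {δ : ℝ} (hδ : 0 ≤ δ) {P : Set ℕ} (hpos : ∀ v ∈ P, 0 < v)
    (hlac : ∀ v ∈ P, ∀ w ∈ P, v < w → (1 + 2 * δ) * v ≤ 2 * δ * w) :
    IsApproxI0Set P (2 * π * δ) := by
  intro f hf
  choose! u₁ u₂ hu using fun n (hn : n ∈ P) => exists_eq_add_div_two_of_norm_le_one (hf n hn)
  obtain ⟨α₁, hα₁⟩ := exists_forall_norm_fourierChar_mul_sub_le hδ hpos hlac u₁
  obtain ⟨α₂, hα₂⟩ := exists_forall_norm_fourierChar_mul_sub_le hδ hpos hlac u₂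
  refine ⟨fun n => 2⁻¹ * 𝐞 (n * α₁) + 2⁻¹ * 𝐞 (n * α₂),
    (isTrigPoly_const_mul_fourierChar _ _).add_s17 (isTrigPoly_const_mul_fourierChar _ _),
    fun n => (norm_add_le _ _).trans (by norm_num [Circle.norm_coe]), fun n hn => ?_⟩
  rw [hu n hn]
  calc ‖2⁻¹ * (𝐞 (n * α₁) : ℂ) + 2⁻¹ * 𝐞 (n * α₂) - (u₁ n + u₂ n) / 2‖
      = ‖((𝐞 (n * α₁) : ℂ) - u₁ n) + (𝐞 (n * α₂) - u₂ n)‖ / 2 := by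
        rw [← RCLike.norm_ofNat (K := ℂ) 2, ← norm_div]
        ring_nf
    _ ≤ (2 * π * δ + 2 * π * δ) / 2 := by
        gcongr
        exact (norm_add_le _ _).trans (add_le_add (hα₁ n hn) (hα₂ n hn))
    _ = 2 * π * δ := by ring

lemma two_pow_mod_thirty {n : ℕ} (hn : 1 ≤ n) :
    2 ^ n % 30 = 2 ∨ 2 ^ n % 30 = 4 ∨ 2 ^ n % 30 = 8 ∨ 2 ^ n % 30 = 16 := by
  induction n, hn using Nat.le_induction with
  | base => norm_num
  | succ n _ ih => rw [pow_succ]; omega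

lemma two_mul_le_two_pow (n : ℕ) : 2 * n ≤ 2 ^ n := by
  rcases n with _ | n
  · simp
  · rw [pow_succ']
    exact Nat.mul_le_mul_left 2 Nat.lt_two_pow_self

lemma two_pow_eq_or_eq_or_eq_or_le {n n' : ℕ} (h : n ≤ n') :
    (n' = n ∧ 2 ^ n' = 2 ^ n) ∨ (n' = n + 1 ∧ 2 ^ n' = 2 * 2 ^ n) ∨
      (n' = n + 2 ∧ 2 ^ n' = 4 * 2 ^ n) ∨ (n + 3 ≤ n' ∧ 8 * 2 ^ n ≤ 2 ^ n') := by
  obtain ⟨k, rfl⟩ := Nat.exists_eq_add_of_le h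
  rcases k with _ | _ | _ | k
  · exact .inl ⟨rfl, rfl⟩
  · exact .inr (.inl ⟨rfl, by ring⟩)
  · exact .inr (.inr (.inl ⟨rfl, by ring⟩))
  · refine .inr (.inr (.inr ⟨by omega, ?_⟩))
    calc 8 * 2 ^ n ≤ 8 * 2 ^ n * 2 ^ k := Nat.le_mul_of_pos_right _ (by positivity)
      _ = 2 ^ (n + (k + 3)) := by ring

lemma thirteen_mul_le_three_mul_of_mod_thirty_eq {v w : ℕ}
    (hv : ∃ n, 1 ≤ n ∧ (v = 2 ^ n ∨ v = 2 ^ n + 2 * n - 1))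
    (hw : ∃ n, 1 ≤ n ∧ (w = 2 ^ n ∨ w = 2 ^ n + 2 * n - 1))
    (hvw : v < w) (hmod : v % 30 = w % 30) : 13 * v ≤ 3 * w := by
  obtain ⟨n, hn, hv⟩ := hv
  obtain ⟨n', hn', hw⟩ := hw
  have := two_pow_mod_thirty hn
  have := two_pow_mod_thirty hn'
  have := two_mul_le_two_pow n
  have := two_mul_le_two_pow n'
  -- as `2 ^ n % 30 ∈ {2, 4, 8, 16}`, the residues mod 30 of the terms with exponents `n`, `n + 1`,
  -- `n + 2` are pairwise distinct within each family, and the two families differ in parity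
  rcases le_total n n' with h | h <;>
    rcases two_pow_eq_or_eq_or_eq_or_le h with h' | h' | h' | h' <;> omega

theorem isI0Set_two_pow_union_two_pow_add_two_mul_sub_one :
    IsI0Set ({m : ℕ | ∃ n : ℕ, 1 ≤ n ∧ m = 2 ^ n} ∪
      {m : ℕ | ∃ n : ℕ, 1 ≤ n ∧ m = 2 ^ n + 2 * n - 1}) := by
  set E := {m : ℕ | ∃ n : ℕ, 1 ≤ n ∧ m = 2 ^ n} ∪ {m : ℕ | ∃ n : ℕ, 1 ≤ n ∧ m = 2 ^ n + 2 * n - 1}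
  have hE (m : ℕ) (hm : m ∈ E) : ∃ n, 1 ≤ n ∧ (m = 2 ^ n ∨ m = 2 ^ n + 2 * n - 1) := by
    rcases hm with ⟨n, hn, rfl⟩ | ⟨n, hn, rfl⟩ <;> exact ⟨n, hn, by simp⟩
  have hpiece (a : ZMod 30) : IsApproxI0Set {m ∈ E | (m : ZMod 30) = a} (2 * π * (3 / 20)) := by
    refine isApproxI0Set_of_lacunary (by norm_num) (fun v hv => ?_) fun v hv w hw hvw => ?_
    · obtain ⟨n, hn, h⟩ := hE v hv.1
      have : 1 ≤ 2 ^ n := Nat.one_le_two_pow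
      omega
    · have := thirteen_mul_le_three_mul_of_mod_thirty_eq (hE v hv.1) (hE w hw.1) hvw
        ((ZMod.natCast_eq_natCast_iff' v w 30).1 (hv.2.trans hw.2.symm))
      have : (13 : ℝ) * v ≤ 3 * w := by exact_mod_cast this
      linarith
  exact (IsApproxI0Set.of_zmod_pieces 30 hpiece).isI0Set (by positivity) (by nlinarith [pi_lt_d2])

lemma exists_pow_mem_of_mem_nhds_one {G : Type*} [Group G] [TopologicalSpace G]
    [IsTopologicalGroup G] [CompactSpace G] (g : G) {U : Set G} (hU : U ∈ 𝓝 1) (N : ℕ) :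
    ∃ t ≥ N, g ^ t ∈ U := by
  obtain ⟨x, -, hx⟩ := isCompact_univ.exists_mapClusterPt (f := atTop) (u := (g ^ · : ℕ → G))
    (by simp)
  -- two visits of the orbit to a small neighbourhood of the cluster point `x`
  have hdiv : Tendsto (fun p : G × G => p.1 * p.2⁻¹) (𝓝 x ×ˢ 𝓝 x) (𝓝 1) := by
    have hc : Continuous fun p : G × G => p.1 * p.2⁻¹ := by fun_prop
    simpa [nhds_prod_eq] using hc.tendsto (x, x)
  obtain ⟨O, hO, hOU⟩ := Filter.mem_prod_self_iff.1 (hdiv hU)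
  obtain ⟨j, hj⟩ := (hx.frequently hO).exists
  obtain ⟨i, hij, hi⟩ := frequently_atTop.1 (hx.frequently hO) (j + N)
  refine ⟨i - j, by omega, ?_⟩
  rw [pow_sub g (by omega : j ≤ i)]
  exact hOU (Set.mk_mem_prod hi hj)

lemma IsTrigPoly.exists_forall_norm_add_mul_sub_lt {φ : ℕ → ℂ} (hφ : IsTrigPoly φ) (d N : ℕ)
    {ε : ℝ} (hε : 0 < ε) : ∃ t ≥ N, ∀ n, ‖φ (n + d * t) - φ n‖ < ε := by
  obtain ⟨k, c, α, hφ⟩ := isTrigPoly_iff.1 hφ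
  set B := ∑ j, ‖c j‖
  have hB : 0 ≤ B := Finset.sum_nonneg fun j _ => norm_nonneg _
  set η := ε / (B + 1)
  have hU : {h : Fin k → Circle | ∀ j, ‖(h j : ℂ) - 1‖ < η} ∈ 𝓝 1 := by
    refine Filter.eventually_all.2 fun j => ?_
    have hc : Continuous fun h : Fin k → Circle => ((h j : Circle) : ℂ) := by fun_prop
    simpa [dist_eq_norm] using Metric.tendsto_nhds.1 (hc.tendsto 1) η (by positivity)
  obtain ⟨t, htN, ht⟩ := exists_pow_mem_of_mem_nhds_one (fun j => 𝐞 (d * α j)) hU N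
  refine ⟨t, htN, fun n => ?_⟩
  have hterm (j : Fin k) : ‖c j * 𝐞 ((n + d * t : ℕ) * α j) - c j * 𝐞 (n * α j)‖ ≤ ‖c j‖ * η := by
    have : 𝐞 ((n + d * t : ℕ) * α j) = 𝐞 (n * α j) * 𝐞 (d * α j) ^ t := by
      rw [← AddChar.map_nsmul_eq_pow, ← AddChar.map_add_eq_mul, nsmul_eq_mul]
      push_cast; ring_nf
    rw [this, Circle.coe_mul, ← mul_sub, ← mul_sub_one, norm_mul, norm_mul,
      Circle.norm_coe, one_mul]
    gcongr
    simpa using (ht j).le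
  calc ‖φ (n + d * t) - φ n‖
      = ‖∑ j, (c j * 𝐞 ((n + d * t : ℕ) * α j) - c j * 𝐞 (n * α j))‖ := by
        rw [hφ, hφ, Finset.sum_sub_distrib]
    _ ≤ ∑ j, ‖c j‖ * η := (norm_sum_le _ _).trans (Finset.sum_le_sum fun j _ => hterm j)
    _ = B * η := by rw [Finset.sum_mul]
    _ < ε := by
        rw [mul_div_assoc', div_lt_iff₀ (by positivity)]
        nlinarith

lemma IsBohrAP.exists_forall_norm_add_mul_sub_lt {ψ : ℕ → ℂ} (hψ : IsBohrAP ψ) (d N : ℕ)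
    {ε : ℝ} (hε : 0 < ε) : ∃ t ≥ N, ∀ n, ‖ψ (n + d * t) - ψ n‖ < ε := by
  obtain ⟨φ, hφ, hψφ⟩ := hψ (ε / 3) (by positivity)
  obtain ⟨t, htN, ht⟩ := hφ.exists_forall_norm_add_mul_sub_lt d N (ε := ε / 3) (by positivity)
  refine ⟨t, htN, fun n => ?_⟩
  calc ‖ψ (n + d * t) - ψ n‖
      ≤ ‖ψ (n + d * t) - φ (n + d * t)‖ + ‖φ (n + d * t) - φ n‖ + ‖φ n - ψ n‖ :=
        by simpa only [dist_eq_norm] using dist_triangle4 _ (φ (n + d * t)) (φ n) _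
    _ < ε / 3 + ε / 3 + ε / 3 := by
        gcongr
        · exact hψφ _
        · exact ht n
        · rw [norm_sub_rev]; exact hψφ n
    _ = ε := by ring

lemma two_pow_add_two_mul_ne_two_pow {t : ℕ} (ht : 3 ≤ t) (k : ℕ) : 2 ^ t + 2 * t ≠ 2 ^ k := by
  have h2t : 2 * t < 2 ^ t := by
    have := two_mul_le_two_pow (t - 1)
    have : 2 ^ t = 2 * 2 ^ (t - 1) := by rw [← pow_succ']; congr 1; omega
    omega
  rcases le_total k t with h | h <;>
    rcases two_pow_eq_or_eq_or_eq_or_le h with h' | h' | h' | h' <;> omega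

lemma not_isI0Set_of_two_pow_mem {E : Set ℕ} (hE : ∀ t ≥ 1, 2 ^ t ∈ E ∧ 2 ^ t + 2 * t ∈ E) :
    ¬ IsI0Set E := by
  intro hI0
  classical
  let f : ℕ → ℂ := fun m => if ∃ k, m = 2 ^ k then 1 else 0
  obtain ⟨ψ, hψ, hψf⟩ := hI0 f ⟨1, fun m _ => by by_cases h : ∃ k, m = 2 ^ k <;> simp [f, h]⟩
  obtain ⟨t, ht, hψt⟩ := hψ.exists_forall_norm_add_mul_sub_lt 2 3 one_pos
  have h₁ : ψ (2 ^ t) = 1 := by rw [hψf _ (hE t (by omega)).1]; exact if_pos ⟨t, rfl⟩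
  have h₂ : ψ (2 ^ t + 2 * t) = 0 := by
    rw [hψf _ (hE t (by omega)).2]
    exact if_neg fun ⟨k, hk⟩ => two_pow_add_two_mul_ne_two_pow ht k hk
  simpa [h₁, h₂] using hψt (2 ^ t)

/-- `{2^n} ∪ {2^n + 2n - 1}` is an `I₀`-set, but its sumset with `{0, 1}`, namely
`{2^n} ∪ {2^n + 2n - 1} ∪ {2^n + 1} ∪ {2^n + 2n}`, is not an `I₀`-set. -/
theorem I0_sum_finite_counterexample :
    IsI0Set ({m : ℕ | ∃ n : ℕ, 1 ≤ n ∧ m = 2 ^ n} ∪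
      {m : ℕ | ∃ n : ℕ, 1 ≤ n ∧ m = 2 ^ n + 2 * n - 1}) ∧
    ¬ IsI0Set ({m : ℕ | ∃ n : ℕ, 1 ≤ n ∧ m = 2 ^ n} ∪
      {m : ℕ | ∃ n : ℕ, 1 ≤ n ∧ m = 2 ^ n + 2 * n - 1} ∪
      {m : ℕ | ∃ n : ℕ, 1 ≤ n ∧ m = 2 ^ n + 1} ∪
      {m : ℕ | ∃ n : ℕ, 1 ≤ n ∧ m = 2 ^ n + 2 * n}) :=
  ⟨isI0Set_two_pow_union_two_pow_add_two_mul_sub_one,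
    not_isI0Set_of_two_pow_mem fun t ht => ⟨.inl (.inl (.inl ⟨t, ht, rfl⟩)), .inr ⟨t, ht, rfl⟩⟩⟩
end
end
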